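/- arXiv:1607.07833 — 4 statements merged into one kernel-verified Lean document; each statement's English description precedes it below -/
import Mathlib

section
/- Assume the ladder system (L_α : α ∈ S) has the uniformization property. Let 𝔐 be the L-structure on 𝐉 = J₀ ⊗ 2^{≤ω} defined analogously to 𝔄 on J. For any sequence 𝔉 = (f_α : α ∈ S) with each f_α ∈ 2^ω, let J_𝔉 consist of X = {η ∈ J : lg(η) < ω} together with all pairs (ν_α, η₁) ∈ 𝐉 where η₁ differs from f_α at only finitely many places, and let 𝔄_𝔉 be the substructure of 𝔐 with domain J_𝔉. Then 𝔄_𝔉 is isomorphic to 𝔄. -/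
namespace LadderPaper

open FirstOrder FirstOrder.Language Cardinal

noncomputable section

/-- The first uncountable ordinal. -/
def ω₁ : Ordinal.{0} := (Cardinal.aleph 1).ord

/-- `C` is a club (closed unbounded) subset of `ω₁`. -/
def IsClubBelow (C : Set Ordinal.{0}) : Prop :=
  C ⊆ Set.Iio ω₁ ∧ (∀ α < ω₁, ∃ β ∈ C, α ≤ β) ∧
    ∀ α < ω₁, Order.IsSuccLimit α → (∀ β < α, ∃ γ ∈ C, β ≤ γ ∧ γ < α) → α ∈ C

/-- `S` is a stationary subset of `ω₁`. -/
def IsStationaryBelow (S : Set Ordinal.{0}) : Prop :=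
  S ⊆ Set.Iio ω₁ ∧ ∀ C, IsClubBelow C → (S ∩ C).Nonempty

/-- `ν` gives a ladder system on `S`:  for `α ∈ S`, `ν α` is the strictly increasing
enumeration of a cofinal subset `L_α ⊆ α` of order type `ω`. -/
def IsLadderSystem (S : Set Ordinal.{0}) (ν : Ordinal.{0} → ℕ → Ordinal.{0}) : Prop :=
  ∀ α ∈ S, StrictMono (ν α) ∧ (∀ n, ν α n < α) ∧ ∀ β < α, ∃ n, β ≤ ν α n

/-- The ladder system `(range (ν α) : α ∈ S)` has the uniformization property:  for any
sequence of colorings `f_α : L_α → 2` (presented as `f α : ℕ → Bool` via the enumerations)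
there is `g : ω₁ → 2` agreeing with each `f_α` on all but finitely many rungs. -/
def Uniformization (S : Set Ordinal.{0}) (ν : Ordinal.{0} → ℕ → Ordinal.{0}) : Prop :=
  ∀ f : Ordinal.{0} → ℕ → Bool, ∃ g : Ordinal.{0} → Bool,
    ∀ α ∈ S, {n : ℕ | g (ν α n) ≠ f α n}.Finite

/-- Raw data for an element of the product tree `J₀ ⊗ 2^{≤ω}`: a length `≤ ω`, an ordinal
sequence and a binary sequence, with junk conventions beyond the length. -/
structure PreJ : Type 1 where
  len : ℕ∞
  ord : ℕ → Ordinal.{0}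
  bit : ℕ → Bool

/-- The junk convention: `x` is trivial beyond its length. -/
def PreJ.Reduced (x : PreJ) : Prop :=
  ∀ n : ℕ, ¬((n : ℕ∞) < x.len) → x.ord n = 0 ∧ x.bit n = false

variable (S : Set Ordinal.{0}) (ν : Ordinal.{0} → ℕ → Ordinal.{0})

/-- The first coordinate of `x` is an element of `J₀`: strictly increasing into `ω₁`, and
equal to a ladder enumeration `ν β`, `β ∈ S`, if it is infinite. -/
def PreJ.J0 (x : PreJ) : Prop :=
  (∀ m n : ℕ, m < n → ((n : ℕ∞) < x.len) → x.ord m < x.ord n) ∧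
    (∀ n : ℕ, ((n : ℕ∞) < x.len) → x.ord n < ω₁) ∧
    (x.len = ⊤ → ∃ β ∈ S, ∀ n, x.ord n = ν β n)

/-- Membership in `J = J₀ ⊗ J₁`, where `J₁ ⊆ 2^{≤ω}` consists of the finite-support
sequences. -/
def PreJ.InJ (x : PreJ) : Prop :=
  x.Reduced ∧ x.J0 S ν ∧ {n : ℕ | x.bit n = true}.Finite

/-- Membership in `𝐉 = J₀ ⊗ 2^{≤ω}`. -/
def PreJ.InJfull (x : PreJ) : Prop := x.Reduced ∧ x.J0 S ν

/-- `x` codes an element `η₀ ∈ J₀` (second coordinate constantly `false`). -/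
def PreJ.IsJ0Elem (x : PreJ) : Prop := x.Reduced ∧ x.J0 S ν ∧ ∀ n, x.bit n = false

/-- `η` and `x` have the same first coordinate (`η₀ = τ₀`). -/
def PreJ.sameFirst (η x : PreJ) : Prop := η.len = x.len ∧ η.ord = x.ord

open Classical in
/-- Restriction `η ↦ η↾α`. -/
def PreJ.restrict (x : PreJ) (α : ℕ∞) : PreJ where
  len := min α x.len
  ord n := if (n : ℕ∞) < min α x.len then x.ord n else 0
  bit n := if (n : ℕ∞) < min α x.len then x.bit n else false

/-- Pointwise mod-2 addition on second coordinates: `𝛈(τ) = (τ₀, η₁ ⊕ τ₁)`. -/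
def PreJ.addBit (η x : PreJ) : PreJ where
  len := x.len
  ord := x.ord
  bit n := xor (η.bit n) (x.bit n)

theorem PreJ.restrict_reduced (x : PreJ) (α : ℕ∞) : (x.restrict α).Reduced := by
  intro n hn
  constructor <;> simp only [PreJ.restrict] at hn ⊢ <;> rw [if_neg hn]

theorem PreJ.restrict_j0 {x : PreJ} (hx : x.J0 S ν) (hred : x.Reduced) (α : ℕ∞) :
    (x.restrict α).J0 S ν := by
  obtain ⟨h1, h2, h3⟩ := hx
  refine ⟨?_, ?_, ?_⟩
  · intro m n hmn hn
    simp only [PreJ.restrict] at hn ⊢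
    rw [if_pos hn, if_pos (lt_trans (by exact_mod_cast hmn) hn)]
    exact h1 m n hmn (lt_of_lt_of_le hn (min_le_right _ _))
  · intro n hn
    simp only [PreJ.restrict] at hn ⊢
    rw [if_pos hn]
    exact h2 n (lt_of_lt_of_le hn (min_le_right _ _))
  · intro htop
    simp only [PreJ.restrict] at htop ⊢
    rw [min_eq_top] at htop
    obtain ⟨β, hβ, hord⟩ := h3 htop.2
    refine ⟨β, hβ, fun n => ?_⟩
    simp only [PreJ.restrict, htop.1, htop.2, min_self]
    rw [if_pos (by simp [htop.2])]
    exact hord n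

theorem PreJ.restrict_inJ {x : PreJ} (hx : x.InJ S ν) (α : ℕ∞) : (x.restrict α).InJ S ν := by
  obtain ⟨hred, hj0, hfin⟩ := hx
  refine ⟨x.restrict_reduced α, PreJ.restrict_j0 S ν hj0 hred α, ?_⟩
  refine hfin.subset ?_
  intro n hn
  simp only [PreJ.restrict, Set.mem_setOf_eq] at hn ⊢
  by_cases h : (n : ℕ∞) < min α x.len
  · rwa [if_pos h] at hn
  · rw [if_neg h] at hn; exact absurd hn (by simp)

theorem PreJ.restrict_inJfull {x : PreJ} (hx : x.InJfull S ν) (α : ℕ∞) :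
    (x.restrict α).InJfull S ν :=
  ⟨x.restrict_reduced α, PreJ.restrict_j0 S ν hx.2 hx.1 α⟩

theorem PreJ.addBit_reduced {η x : PreJ} (hη : η.Reduced) (hx : x.Reduced)
    (hfirst : η.sameFirst x) : (η.addBit x).Reduced := by
  intro n hn
  simp only [PreJ.addBit] at hn ⊢
  refine ⟨(hx n hn).1, ?_⟩
  rw [(hx n hn).2, (hη n (by rwa [hfirst.1])).2]
  rfl

theorem PreJ.addBit_inJ {η x : PreJ} (hη : η.InJ S ν) (hx : x.InJ S ν)
    (hfirst : η.sameFirst x) : (η.addBit x).InJ S ν := by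
  refine ⟨PreJ.addBit_reduced hη.1 hx.1 hfirst, ?_, ?_⟩
  · exact hx.2.1
  · refine ((hη.2.2.union hx.2.2).subset ?_)
    intro n hn
    simp only [PreJ.addBit, Set.mem_setOf_eq] at hn
    by_cases h : η.bit n = true
    · exact Set.mem_union_left _ h
    · refine Set.mem_union_right _ ?_
      simp only [Bool.not_eq_true] at h
      simpa [h] using hn

theorem PreJ.addBit_inJfull {η x : PreJ} (hη : η.InJ S ν) (hx : x.InJfull S ν)
    (hfirst : η.sameFirst x) : (η.addBit x).InJfull S ν :=
  ⟨PreJ.addBit_reduced hη.1 hx.1 hfirst, hx.2⟩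

/-- Unary function symbols of the language: the restrictions `π_α` (`α ≤ ω`) and the
symbols `𝛈` for `η ∈ J`. -/
inductive LFun (S : Set Ordinal.{0}) (ν : Ordinal.{0} → ℕ → Ordinal.{0}) : Type 1
  | proj (α : ℕ∞)
  | add (η : PreJ) (h : η.InJ S ν)

/-- Unary relation symbols: `U_{η₀}` for `η₀ ∈ J₀`. -/
def LRel : Type 1 := {x : PreJ // x.IsJ0Elem S ν}

def Funs : ℕ → Type 1
  | 1 => LFun S ν
  | _ => PEmpty

def Rels : ℕ → Type 1
  | 1 => LRel S ν
  | _ => PEmpty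

/-- The language `L = {U_{η₀}, π_α, 𝛈 : η₀ ∈ J₀, η ∈ J, α ≤ ω}`. -/
def L : FirstOrder.Language.{1, 1} := ⟨Funs S ν, Rels S ν⟩

/-- The underlying set `J = J₀ ⊗ J₁` of `𝔄`. -/
def J : Type 1 := {x : PreJ // x.InJ S ν}

/-- The underlying set `𝐉 = J₀ ⊗ 2^{≤ω}` of the auxiliary structure `𝔐`. -/
def Jfull : Type 1 := {x : PreJ // x.InJfull S ν}

open Classical in
instance instJ : (L S ν).Structure (J S ν) where
  funMap {n} := fun f x =>
    match n, f with
    | 1, .proj α => ⟨(x 0).1.restrict α, PreJ.restrict_inJ S ν (x 0).2 α⟩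
    | 1, .add η h =>
      if hc : η.sameFirst (x 0).1 then ⟨η.addBit (x 0).1, PreJ.addBit_inJ S ν h (x 0).2 hc⟩
      else x 0
    | 0, f => f.elim
    | (_ + 2), f => f.elim
  RelMap {n} := fun r x =>
    match n, r with
    | 1, r => r.1.sameFirst (x 0).1
    | 0, r => r.elim
    | (_ + 2), r => r.elim

open Classical in
instance instJfull : (L S ν).Structure (Jfull S ν) where
  funMap {n} := fun f x =>
    match n, f with
    | 1, .proj α => ⟨(x 0).1.restrict α, PreJ.restrict_inJfull S ν (x 0).2 α⟩
    | 1, .add η h =>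
      if hc : η.sameFirst (x 0).1 then ⟨η.addBit (x 0).1, PreJ.addBit_inJfull S ν h (x 0).2 hc⟩
      else x 0
    | 0, f => f.elim
    | (_ + 2), f => f.elim
  RelMap {n} := fun r x =>
    match n, r with
    | 1, r => r.1.sameFirst (x 0).1
    | 0, r => r.elim
    | (_ + 2), r => r.elim

/-- `T = Th(𝔄)`. -/
def T : (L S ν).Theory := (L S ν).completeTheory (J S ν)

/-! ### Generic model-theoretic notions -/

universe u' v' w

section Generic

variable {L' : FirstOrder.Language.{u', v'}}

/-- `φ` isolates the type of the tuple `a` (with respect to `T'`). -/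
def Isol (T' : L'.Theory) {M : Type w} [L'.Structure M] {n : ℕ} (a : Fin n → M)
    (φ : L'.Formula (Fin n)) : Prop :=
  φ.Realize a ∧ ∀ ψ : L'.Formula (Fin n), ψ.Realize a → T' ⊨ᵇ φ.imp ψ

/-- `M` is an atomic model of `T'`: the type of every finite tuple is isolated. -/
def IsAtomicModel (T' : L'.Theory) (M : Type w) [L'.Structure M] : Prop :=
  M ⊨ T' ∧ ∀ (n : ℕ) (a : Fin n → M), ∃ φ : L'.Formula (Fin n), Isol T' a φ

/-- `M` is a prime model of `T'`: it elementarily embeds into every model of `T'`. -/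
def IsPrime (T' : L'.Theory) (M : Type w) [L'.Structure M] : Prop :=
  M ⊨ T' ∧ ∀ (N : Type w) [L'.Structure N], N ⊨ T' → Nonempty (M ↪ₑ[L'] N)

/-- The type of `b` over the parameter set `A` (inside the model `M`) is isolated:  some
formula `φ(ā, x)` with parameters `ā ∈ A` satisfied by `b` decides, over the complete
theory of `M` with constants for `A`, every formula `ψ(ā, c̄, x)` with parameters in `A`. -/
def IsolatedOver (T' : L'.Theory) {M : Type w} [L'.Structure M] (A : Set M) (b : M) : Prop :=
  ∃ (m : ℕ) (a : Fin m → M) (φ : L'.Formula (Fin (m + 1))),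
    (∀ i, a i ∈ A) ∧ φ.Realize (Fin.snoc a b) ∧
      ∀ (k : ℕ) (c : Fin k → M) (ψ : L'.Formula (Fin (m + k + 1))), (∀ i, c i ∈ A) →
        ψ.Realize (Fin.snoc (Fin.append a c) b) →
          ∀ b' : M, φ.Realize (Fin.snoc a b') → ψ.Realize (Fin.snoc (Fin.append a c) b')

/-- `M` is a constructible model of `T'`: it admits an enumeration `(a_α : α < δ)` such
that the type of each `a_α` over its predecessors is isolated. -/
def IsConstructible (T' : L'.Theory) (M : Type w) [L'.Structure M] : Prop :=
  M ⊨ T' ∧ ∃ (δ : Ordinal.{w}) (e : {o : Ordinal.{w} // o < δ} → M), Function.Surjective e ∧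
    ∀ β : {o : Ordinal // o < δ}, IsolatedOver T' (e '' {γ | γ.1 < β.1}) (e β)

end Generic


/-! ### The substructures `𝔄_𝔉 ⊆ 𝔐` -/

variable (f : Ordinal.{0} → ℕ → Bool)

/-- The underlying set `J_𝔉` of `𝔄_𝔉`: all finite sequences, together with the pairs
`(ν_α, η₁)` with `η₁` differing from `f_α` in only finitely many places. -/
def JFset : Set (Jfull S ν) :=
  {x | x.1.len < ⊤ ∨ ∃ α ∈ S, x.1.len = ⊤ ∧ (∀ n, x.1.ord n = ν α n) ∧
    {n : ℕ | x.1.bit n ≠ f α n}.Finite}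

theorem JFset.restrict_mem {x : Jfull S ν} (hx : x ∈ JFset S ν f) (α : ℕ∞) :
    (⟨x.1.restrict α, PreJ.restrict_inJfull S ν x.2 α⟩ : Jfull S ν) ∈ JFset S ν f := by
  rcases hx with hlt | ⟨α', hα'S, hlen, hord, hbit⟩
  · exact Or.inl (lt_of_le_of_lt (min_le_right _ _) hlt)
  · by_cases hα : α = ⊤
    · refine Or.inr ⟨α', hα'S, ?_, ?_, ?_⟩
      · simp [PreJ.restrict, hα, hlen]
      · intro n
        simp only [PreJ.restrict, hα, hlen, min_self]
        rw [if_pos (by exact_mod_cast WithTop.coe_lt_top n)]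
        exact hord n
      · refine hbit.subset ?_
        intro n hn
        simp only [PreJ.restrict, hα, hlen, min_self, Set.mem_setOf_eq] at hn ⊢
        rwa [if_pos (by exact_mod_cast WithTop.coe_lt_top n)] at hn
    · exact Or.inl (lt_of_le_of_lt (min_le_left _ _) (lt_top_iff_ne_top.2 hα))

theorem JFset.addBit_mem {η : PreJ} (hη : η.InJ S ν) {x : Jfull S ν} (hx : x ∈ JFset S ν f)
    (hc : η.sameFirst x.1) :
    (⟨η.addBit x.1, PreJ.addBit_inJfull S ν hη x.2 hc⟩ : Jfull S ν) ∈ JFset S ν f := by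
  rcases hx with hlt | ⟨α', hα'S, hlen, hord, hbit⟩
  · exact Or.inl hlt
  · refine Or.inr ⟨α', hα'S, hlen, hord, ?_⟩
    refine (hη.2.2.union hbit).subset ?_
    intro n hn
    simp only [PreJ.addBit, Set.mem_setOf_eq] at hn
    by_cases hb : η.bit n = true
    · exact Set.mem_union_left _ hb
    · simp only [Bool.not_eq_true] at hb
      refine Set.mem_union_right _ ?_
      simpa [hb] using hn

/-- The substructure `𝔄_𝔉` of `𝔐` with domain `J_𝔉`. -/
def JF : Type 1 := {y : Jfull S ν // y ∈ JFset S ν f}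

open Classical in
instance instJF : (L S ν).Structure (JF S ν f) where
  funMap {n} := fun g x =>
    match n, g with
    | 1, .proj α => ⟨⟨(x 0).1.1.restrict α, PreJ.restrict_inJfull S ν (x 0).1.2 α⟩,
        JFset.restrict_mem S ν f (x 0).2 α⟩
    | 1, .add η h =>
      if hc : η.sameFirst (x 0).1.1 then
        ⟨⟨η.addBit (x 0).1.1, PreJ.addBit_inJfull S ν h (x 0).1.2 hc⟩,
          JFset.addBit_mem S ν f h (x 0).2 hc⟩
      else x 0
    | 0, g => g.elim
    | (_ + 2), g => g.elim
  RelMap {n} := fun r x =>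
    match n, r with
    | 1, r => r.1.sameFirst (x 0).1.1
    | 0, r => r.elim
    | (_ + 2), r => r.elim



/-!
Uniformization applied to `𝔉` gives `g : ω₁ → 2` with `g ∘ ν_α =* f_α` for every `α ∈ S`.
Adding `g` along the first coordinate, `(η₀, η₁) ↦ (η₀, η₁ ⊕ g ∘ η₀)`, is an involution of `𝐉`
that fixes first coordinates and commutes with every `π_α` and every `𝛈`. On elements
`(ν_α, η₁)` of length `ω` it turns `η₁ =* f_α` into `η₁ ⊕ g ∘ ν_α =* 0`, i.e. finite support, and
back, while finite sequences stay finite; so it restricts to an isomorphism `𝔄_𝔉 ≅ 𝔄`.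
-/

namespace PreJ

open Classical in
def twist (g : Ordinal.{0} → Bool) (x : PreJ) : PreJ where
  len := x.len
  ord := x.ord
  bit n := if (n : ℕ∞) < x.len then xor (x.bit n) (g (x.ord n)) else false

open Classical in
/-- The common interpretation of the function symbol `𝛈` in `𝔄`, `𝔐` and `𝔄_𝔉`. -/
def act (η x : PreJ) : PreJ := if η.sameFirst x then η.addBit x else x

variable (g : Ordinal.{0} → Bool)

theorem twist_reduced {x : PreJ} (hx : x.Reduced) : (x.twist g).Reduced :=
  fun n hn => ⟨(hx n hn).1, if_neg hn⟩

theorem twist_twist {x : PreJ} (hx : x.Reduced) : (x.twist g).twist g = x := by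
  obtain ⟨l, o, b⟩ := x
  simp only [twist, mk.injEq, true_and]
  funext n
  by_cases h : (n : ℕ∞) < l
  · simp [h]
  · simpa [h] using ((hx n h).2).symm

theorem twist_restrict (x : PreJ) (α : ℕ∞) :
    (x.restrict α).twist g = (x.twist g).restrict α := by
  simp only [twist, restrict, mk.injEq, true_and]
  refine ⟨rfl, funext fun n => ?_⟩
  by_cases h : (n : ℕ∞) < min α x.len
  · simp [h, h.trans_le (min_le_right α x.len)]
  · simp [h]

theorem twist_addBit {η x : PreJ} (hη : η.Reduced) (hc : η.sameFirst x) :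
    (η.addBit x).twist g = η.addBit (x.twist g) := by
  simp only [twist, addBit, mk.injEq, true_and]
  funext n
  by_cases h : (n : ℕ∞) < x.len
  · simp [h]
  · simp [h, (hη n (hc.1 ▸ h)).2]

theorem twist_act {η : PreJ} (hη : η.Reduced) (x : PreJ) :
    (η.act x).twist g = η.act (x.twist g) := by
  by_cases hc : η.sameFirst x
  · exact (congrArg (twist g) (if_pos hc)).trans ((twist_addBit g hη hc).trans (if_pos hc).symm)
  · exact (congrArg (twist g) (if_neg hc)).trans (if_neg hc).symm

theorem twist_bit_of_len_eq_top {x : PreJ} (hx : x.len = ⊤) (n : ℕ) :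
    (x.twist g).bit n = xor (x.bit n) (g (x.ord n)) := by
  simp [twist, hx]

theorem finite_twist_bit_of_len_lt_top {x : PreJ} (hx : x.len < ⊤) :
    {n | (x.twist g).bit n = true}.Finite := by
  obtain ⟨l, hl⟩ := ENat.ne_top_iff_exists.1 hx.ne
  refine (Set.finite_Iio l).subset fun n hn => ?_
  by_contra h
  simp [twist, ← hl, Set.mem_Iio.not.1 h] at hn

end PreJ

section Twist

open Filter

variable {S ν f} {g : Ordinal.{0} → Bool}

theorem twist_inJ_of_mem_JFset (hg : ∀ α ∈ S, {n | g (ν α n) ≠ f α n}.Finite)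
    {x : Jfull S ν} (hx : x ∈ JFset S ν f) : (x.1.twist g).InJ S ν := by
  refine ⟨PreJ.twist_reduced g x.2.1, x.2.2, ?_⟩
  rcases hx with hlt | ⟨α, hα, hlen, hord, hbit⟩
  · exact PreJ.finite_twist_bit_of_len_lt_top g hlt
  · have h : ∀ᶠ n in cofinite, x.1.bit n = g (ν α n) :=
      ((eventually_cofinite.2 hbit).and (eventually_cofinite.2 (hg α hα))).mono
        fun n h => h.1.trans h.2.symm
    simpa [PreJ.twist_bit_of_len_eq_top g hlen, hord] using eventually_cofinite.1 h

theorem twist_mem_JFset_of_inJ (hg : ∀ α ∈ S, {n | g (ν α n) ≠ f α n}.Finite)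
    (x : J S ν) :
    (⟨x.1.twist g, PreJ.twist_reduced g x.2.1, x.2.2.1⟩ : Jfull S ν) ∈ JFset S ν f := by
  by_cases hlen : x.1.len = ⊤
  · obtain ⟨α, hα, hord⟩ := x.2.2.1.2.2 hlen
    refine Or.inr ⟨α, hα, hlen, hord, ?_⟩
    have h : ∀ᶠ n in cofinite, x.1.bit n = false ∧ g (ν α n) = f α n :=
      (eventually_cofinite.2 (by simpa using x.2.2.2)).and (eventually_cofinite.2 (hg α hα))
    refine eventually_cofinite.1 (h.mono fun n hn => ?_)
    simp [PreJ.twist_bit_of_len_eq_top g hlen, hord, hn.1, hn.2]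
  · exact Or.inl (lt_top_iff_ne_top.2 hlen)

theorem JF.val_funMap_add {η : PreJ} (hη : η.InJ S ν) (x : Fin 1 → JF S ν f) :
    (Structure.funMap (L := L S ν) (n := 1) (.add η hη) x).1.1 = η.act (x 0).1.1 := by
  by_cases hc : η.sameFirst (x 0).1.1
  · exact (congrArg (fun y : JF S ν f => y.1.1) (dif_pos hc)).trans (if_pos hc).symm
  · exact (congrArg (fun y : JF S ν f => y.1.1) (dif_neg hc)).trans (if_neg hc).symm

theorem J.val_funMap_add {η : PreJ} (hη : η.InJ S ν) (x : Fin 1 → J S ν) :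
    (Structure.funMap (L := L S ν) (n := 1) (.add η hη) x).1 = η.act (x 0).1 := by
  by_cases hc : η.sameFirst (x 0).1
  · exact (congrArg (fun y : J S ν => y.1) (dif_pos hc)).trans (if_pos hc).symm
  · exact (congrArg (fun y : J S ν => y.1) (dif_neg hc)).trans (if_neg hc).symm

def twistEquiv (hg : ∀ α ∈ S, {n | g (ν α n) ≠ f α n}.Finite) :
    JF S ν f ≃[L S ν] J S ν where
  toFun x := ⟨x.1.1.twist g, twist_inJ_of_mem_JFset hg x.2⟩
  invFun x := ⟨⟨x.1.twist g, PreJ.twist_reduced g x.2.1, x.2.2.1⟩, twist_mem_JFset_of_inJ hg x⟩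
  left_inv x := Subtype.ext (Subtype.ext (PreJ.twist_twist g x.1.2.1))
  right_inv x := Subtype.ext (PreJ.twist_twist g x.2.1)
  map_fun' {n} F x := by
    match n, F with
    | 1, .proj α => exact Subtype.ext (PreJ.twist_restrict g (x 0).1.1 α)
    | 1, .add η hη =>
      refine Subtype.ext ?_
      rw [J.val_funMap_add]
      exact (congrArg (PreJ.twist g) (JF.val_funMap_add hη x)).trans (PreJ.twist_act g hη.1 _)
  map_rel' {n} r x := by
    match n, r with
    | 1, _ => exact Iff.rfl

end Twist

theorem statement10_general {S : Set Ordinal.{0}} {ν : Ordinal.{0} → ℕ → Ordinal.{0}}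
    (hunif : Uniformization S ν) (f : Ordinal.{0} → ℕ → Bool) :
    Nonempty (JF S ν f ≃[L S ν] J S ν) :=
  let ⟨_, hg⟩ := hunif f
  ⟨twistEquiv hg⟩

/-- Assume the ladder system has the uniformization property.  For any
sequence `𝔉 = (f_α : α ∈ S)` of elements of `2^ω`, the substructure `𝔄_𝔉` of `𝔐`, whose
domain consists of all finite-length elements together with the pairs `(ν_α, η₁)` with
`η₁ =* f_α`, is isomorphic to `𝔄`. -/
theorem statement10 {S : Set Ordinal.{0}} {ν : Ordinal.{0} → ℕ → Ordinal.{0}}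
    (hS : IsStationaryBelow S) (hlim : ∀ α ∈ S, Order.IsSuccLimit α)
    (hlad : IsLadderSystem S ν)
    (hunif : Uniformization S ν) (f : Ordinal.{0} → ℕ → Bool) :
    Nonempty (JF S ν f ≃[L S ν] J S ν) :=
  statement10_general hunif f

end
end LadderPaper
end

section
/- Let 𝔄 be the L-structure on J from the ladder-system example and T = Th(𝔄). Then 𝔄 is not a constructible model of T: there is no enumeration 𝔄 = (η^α : α < ω₁) such that for every β < ω₁ the type tp(η^β / {η^γ : γ < β}) is isolated. -/
namespace LadderPaper

open FirstOrder FirstOrder.Language Cardinal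

noncomputable section

variable (S : Set Ordinal.{0}) (ν : Ordinal.{0} → ℕ → Ordinal.{0})

/-! ### Generic model-theoretic notions -/

universe u' v' w

/-!
Suppose `e` enumerates `𝔄` with isolated types. The closure points of the enumeration form a
club, so some `δ ∈ S` is one: everything enumerated before `δ` has its entries bounded below
`δ`, and every finite sequence with entries below `δ` is enumerated before `δ`. Let `b` be the
first element enumerated whose first coordinate is `ν δ`; it comes at or after stage `δ`. The
finitely many parameters of a formula isolating its type over its predecessors meet only
finitely many rungs of the ladder at `δ`, so flipping the bit above a rung `ν δ n` that they
avoid is an automorphism fixing them. It must then preserve the type of `b` over its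
predecessors, yet it moves `b↾(n+1)`, which is one of them.
-/

variable {S ν}

open Set Filter Function

theorem omega1_eq_omega_one : ω₁ = Ordinal.omega 1 := Cardinal.ord_aleph 1

theorem isSuccLimit_omega1 : Order.IsSuccLimit ω₁ :=
  omega1_eq_omega_one ▸ isSuccLimit_omega 1

theorem aleph0_lt_cof_omega1 : ℵ₀ < ω₁.cof := by
  rw [omega1_eq_omega_one, cof_omega_one]
  exact aleph0_lt_aleph_one

theorem countable_Iio_of_lt_omega1 {o : Ordinal.{0}} (h : o < ω₁) : (Iio o).Countable := by
  rw [← le_aleph0_iff_set_countable, mk_Iio_ordinal, lift_le_aleph0, ← lt_aleph_one_iff]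
  exact lt_ord.1 h

theorem exists_lt_omega1_subset_Iio {s : Set Ordinal.{0}} (hs : s.Countable) (hω : s ⊆ Iio ω₁) :
    ∃ b < ω₁, s ⊆ Iio b := by
  have := hs.to_subtype
  refine ⟨⨆ x : s, x.1 + 1, ?_, fun x hx => Ordinal.lt_iSup_add_one (fun x : s => x.1) ⟨x, hx⟩⟩
  rw [omega1_eq_omega_one] at hω ⊢
  exact Ordinal.iSup_lt_omega_one fun x => (isSuccLimit_omega 1).succ_lt (hω x.2)

theorem isClubBelow_closurePoints {F : Ordinal.{0} → Set Ordinal.{0}}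
    (hF : ∀ α < ω₁, (F α).Countable ∧ F α ⊆ Iio ω₁) :
    IsClubBelow {δ | δ < ω₁ ∧ ∀ α < δ, F α ⊆ Iio δ} := by
  have hstep : ∀ α, ∃ α', α < ω₁ → α' < ω₁ ∧ α < α' ∧ ∀ β ≤ α, F β ⊆ Iio α' := by
    intro α
    by_cases hα : α < ω₁
    · have hIic : (Iic α).Countable := by
        rw [← Iio_insert]; exact (countable_Iio_of_lt_omega1 hα).insert α
      obtain ⟨α', hα', hsub⟩ := exists_lt_omega1_subset_Iio (s := insert α (⋃ β ∈ Iic α, F β))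
        ((hIic.biUnion fun β hβ => (hF β (lt_of_le_of_lt hβ hα)).1).insert α)
        (insert_subset hα (iUnion₂_subset fun β hβ => (hF β (lt_of_le_of_lt hβ hα)).2))
      exact ⟨α', fun _ => ⟨hα', hsub (mem_insert α _), fun β hβ =>
        (subset_biUnion_of_mem (u := F) (mem_Iic.2 hβ)).trans ((subset_insert _ _).trans hsub)⟩⟩
    · exact ⟨0, fun h => absurd h hα⟩
  choose g hg using hstep
  refine ⟨fun δ hδ => hδ.1, fun α hα => ?_, fun α hα hlim hcof => ⟨hα, fun β hβ => ?_⟩⟩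
  · have hlt : Ordinal.nfp g α < ω₁ :=
      Ordinal.nfp_lt_ord aleph0_lt_cof_omega1 (fun β hβ => (hg β hβ).1) hα
    have hiter : ∀ n, g^[n] α < ω₁ := fun n => (Ordinal.iterate_le_nfp g α n).trans_lt hlt
    refine ⟨_, ⟨hlt, fun β hβ => ?_⟩, Ordinal.le_nfp g α⟩
    obtain ⟨n, hn⟩ := Ordinal.lt_nfp_iff.1 hβ
    refine ((hg _ (hiter n)).2.2 β hn.le).trans (Iio_subset_Iio ?_)
    rw [← iterate_succ_apply' g n α]
    exact Ordinal.iterate_le_nfp g α (n + 1)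
  · obtain ⟨γ, ⟨-, hγ⟩, hβγ, hγα⟩ := hcof (Order.succ β) (hlim.succ_lt hβ)
    exact (hγ β (Order.lt_succ_iff.2 le_rfl |>.trans_le hβγ)).trans (Iio_subset_Iio hγα.le)

namespace PreJ

def height (x : PreJ) : Ordinal.{0} := ⨆ n, Order.succ (x.ord n)

theorem height_le_iff {x : PreJ} {α : Ordinal.{0}} : x.height ≤ α ↔ ∀ n, x.ord n < α := by
  simp only [height, Ordinal.iSup_le_iff, Order.succ_le_iff]

theorem ord_lt_height (x : PreJ) (n : ℕ) : x.ord n < x.height :=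
  height_le_iff.1 le_rfl n

theorem ord_lt_omega1 {x : PreJ} (hx : x.Reduced) (hj : x.J0 S ν) (n : ℕ) : x.ord n < ω₁ := by
  by_cases hn : (n : ℕ∞) < x.len
  · exact hj.2.1 n hn
  · rw [(hx n hn).1]
    exact isSuccLimit_omega1.bot_lt

theorem height_lt_omega1 {x : PreJ} (hx : x.Reduced) (hj : x.J0 S ν) : x.height < ω₁ := by
  rw [height, omega1_eq_omega_one]
  exact Ordinal.iSup_lt_omega_one fun n =>
    (isSuccLimit_omega 1).succ_lt (omega1_eq_omega_one ▸ ord_lt_omega1 hx hj n)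

theorem ext_of_reduced {x y : PreJ} (hx : x.Reduced) (hy : y.Reduced) (hlen : x.len = y.len)
    (h : ∀ n : ℕ, (n : ℕ∞) < x.len → x.ord n = y.ord n ∧ x.bit n = y.bit n) : x = y := by
  have hpt : ∀ n, x.ord n = y.ord n ∧ x.bit n = y.bit n := by
    intro n
    by_cases hn : (n : ℕ∞) < x.len
    · exact h n hn
    · obtain ⟨hxo, hxb⟩ := hx n hn
      obtain ⟨hyo, hyb⟩ := hy n (hlen ▸ hn)
      exact ⟨hxo.trans hyo.symm, hxb.trans hyb.symm⟩
  cases x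
  cases y
  simp only [mk.injEq]
  exact ⟨hlen, funext fun n => (hpt n).1, funext fun n => (hpt n).2⟩

theorem finite_range_ord {x : PreJ} (hx : x.Reduced) (hlen : x.len ≠ ⊤) :
    (range x.ord).Finite := by
  obtain ⟨N, hN⟩ := ENat.ne_top_iff_exists.1 hlen
  refine (((finite_Iio N).image x.ord).insert 0).subset ?_
  rintro _ ⟨n, rfl⟩
  by_cases hn : n < N
  · exact mem_insert_of_mem _ ⟨n, hn, rfl⟩
  · rw [(hx n (by rw [← hN]; exact_mod_cast hn)).1]
    exact mem_insert 0 _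

theorem restrict_len_ne_top (x : PreJ) (n : ℕ) : (x.restrict n).len ≠ ⊤ :=
  ne_top_of_le_ne_top (ENat.natCast_ne_top n) (min_le_left _ _)

end PreJ

open PreJ

theorem countable_setOf_len_ne_top_height_le {α : Ordinal.{0}} (hα : α < ω₁) :
    {x : J S ν | x.1.len ≠ ⊤ ∧ x.1.height ≤ α}.Countable := by
  have hsub : {x : J S ν | x.1.len ≠ ⊤ ∧ x.1.height ≤ α} ⊆
      ⋃ N : ℕ, {x : J S ν | x.1.len = N ∧ ∀ n, x.1.ord n < α} := by
    rintro x ⟨hlen, hht⟩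
    obtain ⟨N, hN⟩ := ENat.ne_top_iff_exists.1 hlen
    exact mem_iUnion.2 ⟨N, hN.symm, height_le_iff.1 hht⟩
  refine Countable.mono hsub (countable_iUnion fun N => ?_)
  refine MapsTo.countable_of_injOn (f := fun x i => (x.1.ord i, x.1.bit i))
    (t := {f : Fin N → Ordinal.{0} × Bool | ∀ i, f i ∈ Iio α ×ˢ Set.univ}) ?_ ?_
    (countable_pi fun _ => (countable_Iio_of_lt_omega1 hα).prod countable_univ)
  · exact fun x hx i => ⟨hx.2 i, trivial⟩
  · intro x hx y hy hxy
    refine Subtype.ext (ext_of_reduced x.2.1 y.2.1 (hx.1.trans hy.1.symm) fun n hn => ?_)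
    rw [hx.1, Nat.cast_lt] at hn
    exact Prod.ext_iff.1 (congrFun hxy ⟨n, hn⟩)

theorem IsStationaryBelow.exists_closed_under_enum {E : Set Ordinal.{0}}
    (hE : IsStationaryBelow E) {e : {o : Ordinal.{0} // o < ω₁} → J S ν} (he : Surjective e) :
    ∃ δ ∈ E, (∀ γ, γ.1 < δ → (e γ).1.height < δ) ∧
      ∀ x : J S ν, x.1.len ≠ ⊤ → x.1.height < δ → ∃ γ, γ.1 < δ ∧ e γ = x := by
  set F : Ordinal.{0} → Set Ordinal.{0} := fun α =>
    range (fun h : α < ω₁ => (e ⟨α, h⟩).1.height) ∪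
      (fun x => (surjInv he x).1) '' {x : J S ν | x.1.len ≠ ⊤ ∧ x.1.height ≤ α}
  have hF : ∀ α < ω₁, (F α).Countable ∧ F α ⊆ Iio ω₁ := fun α hα =>
    ⟨(countable_range _).union ((countable_setOf_len_ne_top_height_le hα).image _),
      union_subset (range_subset_iff.2 fun _ => height_lt_omega1 (e _).2.1 (e _).2.2.1)
        (image_subset_iff.2 fun x _ => (surjInv he x).2)⟩
  obtain ⟨δ, hδE, -, hδ⟩ := hE.2 _ (isClubBelow_closurePoints hF)
  refine ⟨δ, hδE, fun γ hγ => hδ γ.1 hγ (Or.inl ⟨γ.2, rfl⟩), fun x hx hxδ => ?_⟩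
  exact ⟨surjInv he x, hδ _ hxδ (Or.inr ⟨x, ⟨hx, le_rfl⟩, rfl⟩), surjInv_eq he x⟩

namespace IsLadderSystem

variable (hlad : IsLadderSystem S ν) {δ : Ordinal.{0}} (hδ : δ ∈ S)
include hlad hδ

theorem eventually_notMem_of_finite {s : Set Ordinal.{0}} (hs : (s ∩ Iio δ).Finite) :
    ∀ᶠ n in atTop, ν δ n ∉ s := by
  have hfin : (ν δ ⁻¹' (s ∩ Iio δ)).Finite := hs.preimage (hlad δ hδ).1.injective.injOn
  rw [← Nat.cofinite_eq_atTop]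
  filter_upwards [hfin.eventually_cofinite_notMem] with n hn hns
  exact hn ⟨hns, (hlad δ hδ).2.1 n⟩

theorem eventually_notMem_of_subset_Iio {s : Set Ordinal.{0}} {γ : Ordinal.{0}} (hγ : γ < δ)
    (hs : s ⊆ Iio γ) : ∀ᶠ n in atTop, ν δ n ∉ s := by
  obtain ⟨m, hm⟩ := (hlad δ hδ).2.2 γ hγ
  filter_upwards [eventually_ge_atTop m] with n hn hns
  exact (hs hns).not_ge (hm.trans ((hlad δ hδ).1.monotone hn))

theorem eventually_notMem_range_ord {y : PreJ} (hy : y.InJ S ν)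
    (hne : ¬(y.len = ⊤ ∧ y.ord = ν δ)) : ∀ᶠ n in atTop, ν δ n ∉ range y.ord := by
  by_cases hlen : y.len = ⊤
  · obtain ⟨γ, hγS, hγ⟩ := hy.2.1.2.2 hlen
    have hord : y.ord = ν γ := funext hγ
    rw [hord]
    rcases lt_trichotomy γ δ with hlt | rfl | hgt
    · exact hlad.eventually_notMem_of_subset_Iio hδ hlt (range_subset_iff.2 (hlad γ hγS).2.1)
    · exact absurd ⟨hlen, hord⟩ hne
    · obtain ⟨m, hm⟩ := (hlad γ hγS).2.2 δ hgt
      refine hlad.eventually_notMem_of_finite hδ (((finite_Iio m).image (ν γ)).subset ?_)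
      rintro _ ⟨⟨n, rfl⟩, hn⟩
      exact ⟨n, lt_of_not_ge fun hmn => (hm.trans ((hlad γ hγS).1.monotone hmn)).not_gt hn, rfl⟩
  · exact hlad.eventually_notMem_of_finite hδ
      ((finite_range_ord hy.1 hlen).subset inter_subset_left)

theorem le_height {x : PreJ} (hx : x.ord = ν δ) : δ ≤ x.height := by
  by_contra! h
  obtain ⟨n, hn⟩ := (hlad δ hδ).2.2 _ h
  exact (hn.trans_lt (hx ▸ ord_lt_height x n)).false

theorem height_restrict_lt {x : PreJ} (hx : x.ord = ν δ) (n : ℕ) :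
    (x.restrict (n + 1 : ℕ)).height < δ := by
  refine (height_le_iff.2 fun k => ?_).trans_lt ((hlad δ hδ).2.1 (n + 1))
  simp only [PreJ.restrict]
  split_ifs with hk
  · rw [hx]
    exact (hlad δ hδ).1 (by exact_mod_cast (lt_min_iff.1 hk).1)
  · exact lt_of_le_of_lt zero_le ((hlad δ hδ).1 n.succ_pos)

theorem inJ_mk_top (hδω : δ < ω₁) : (PreJ.mk ⊤ (ν δ) fun _ => false).InJ S ν :=
  ⟨fun n hn => absurd (ENat.natCast_lt_top n) hn,
    ⟨fun _ _ hmn _ => (hlad δ hδ).1 hmn, fun n _ => ((hlad δ hδ).2.1 n).trans hδω,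
      fun _ => ⟨δ, hδ, fun _ => rfl⟩⟩, by simp⟩

end IsLadderSystem

namespace PreJ

def flipBit (ξ : Ordinal.{0}) (x : PreJ) : PreJ where
  len := x.len
  ord := x.ord
  bit n := xor (decide (x.ord n = ξ)) (x.bit n)

variable {ξ : Ordinal.{0}}

theorem flipBit_flipBit (x : PreJ) : (x.flipBit ξ).flipBit ξ = x := by
  cases x
  simp only [flipBit, mk.injEq, true_and]
  exact funext fun n => Bool.bne_self_left _ _

theorem flipBit_addBit (η x : PreJ) : (η.addBit x).flipBit ξ = η.addBit (x.flipBit ξ) := by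
  simp only [flipBit, addBit, mk.injEq, true_and]
  funext n
  exact Bool.xor_left_comm _ _ _

theorem flipBit_eq_self {x : PreJ} (hξ : ξ ∉ range x.ord) : x.flipBit ξ = x := by
  have hne : ∀ n, decide (x.ord n = ξ) = false := fun n => decide_eq_false fun h => hξ ⟨n, h⟩
  simp [flipBit, hne]

theorem flipBit_restrict_succ_ne {x : PreJ} {n : ℕ} (hn : x.ord n = ξ) (hlen : (n : ℕ∞) < x.len) :
    (x.flipBit ξ).restrict (n + 1 : ℕ) ≠ x.restrict (n + 1 : ℕ) := by
  have hn1 : (n : ℕ∞) < n + 1 := by exact_mod_cast n.lt_succ_self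
  intro h
  have hbit := congrArg (fun y => y.bit n) h
  simp [restrict, flipBit, hlen, hn, hn1] at hbit

variable (hξ : ξ ≠ 0)
include hξ

theorem flipBit_restrict (x : PreJ) (α : ℕ∞) :
    (x.restrict α).flipBit ξ = (x.flipBit ξ).restrict α := by
  simp only [flipBit, restrict, mk.injEq, true_and]
  refine ⟨rfl, funext fun n => ?_⟩
  by_cases h : (n : ℕ∞) < min α x.len
  · simp only [h, if_true]
  · simp only [h, if_false, decide_eq_false (Ne.symm hξ), Bool.false_xor]

theorem flipBit_reduced {x : PreJ} (hx : x.Reduced) : (x.flipBit ξ).Reduced := fun n hn => by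
  simp [flipBit, (hx n hn).1, (hx n hn).2, Ne.symm hξ]

theorem subsingleton_setOf_ord_eq {x : PreJ} (hx : x.Reduced) (hj : x.J0 S ν) :
    {n | x.ord n = ξ}.Subsingleton := by
  have hlt : ∀ k, x.ord k = ξ → (k : ℕ∞) < x.len := fun k hk =>
    by_contra fun h => hξ (hk.symm.trans (hx k h).1)
  intro m hm n hn
  by_contra hne
  rcases lt_or_gt_of_ne hne with h | h
  · exact (hj.1 m n h (hlt n hn)).ne (hm.trans hn.symm)
  · exact (hj.1 n m h (hlt m hm)).ne (hn.trans hm.symm)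

theorem flipBit_inJ {x : PreJ} (hx : x.InJ S ν) : (x.flipBit ξ).InJ S ν := by
  refine ⟨flipBit_reduced hξ hx.1, hx.2.1, ?_⟩
  refine (hx.2.2.union (subsingleton_setOf_ord_eq hξ hx.1 hx.2.1).finite).subset fun n hn => ?_
  by_cases h : x.ord n = ξ
  · exact Or.inr h
  · exact Or.inl (by simpa [flipBit, h] using hn)

end PreJ

open Classical in
/-- Definitionally the interpretation of `𝛈` in `𝔄`, named so that its two cases can be
rewritten. -/
def addMap (η : PreJ) (h : η.InJ S ν) (x : J S ν) : J S ν :=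
  if hc : η.sameFirst x.1 then ⟨η.addBit x.1, addBit_inJ S ν h x.2 hc⟩ else x

theorem addMap_of_sameFirst {η : PreJ} {h : η.InJ S ν} {x : J S ν} (hc : η.sameFirst x.1) :
    addMap η h x = ⟨η.addBit x.1, addBit_inJ S ν h x.2 hc⟩ :=
  dif_pos hc

theorem addMap_of_not_sameFirst {η : PreJ} {h : η.InJ S ν} {x : J S ν} (hc : ¬η.sameFirst x.1) :
    addMap η h x = x :=
  dif_neg hc

theorem flipBit_addMap {ξ : Ordinal.{0}} (hξ : ξ ≠ 0) (η : PreJ) (h : η.InJ S ν) (x : J S ν) :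
    (addMap η h x).1.flipBit ξ = (addMap η h ⟨x.1.flipBit ξ, flipBit_inJ hξ x.2⟩).1 := by
  set y : J S ν := ⟨x.1.flipBit ξ, flipBit_inJ hξ x.2⟩
  by_cases hc : η.sameFirst x.1
  · calc (addMap η h x).1.flipBit ξ = (η.addBit x.1).flipBit ξ := by rw [addMap_of_sameFirst hc]
      _ = η.addBit y.1 := flipBit_addBit η x.1
      _ = (addMap η h y).1 := by rw [addMap_of_sameFirst (x := y) hc]
  · calc (addMap η h x).1.flipBit ξ = y.1 := by rw [addMap_of_not_sameFirst hc]
      _ = (addMap η h y).1 := by rw [addMap_of_not_sameFirst (x := y) hc]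

def flipEquiv {ξ : Ordinal.{0}} (hξ : ξ ≠ 0) : J S ν ≃[L S ν] J S ν where
  toFun x := ⟨x.1.flipBit ξ, flipBit_inJ hξ x.2⟩
  invFun x := ⟨x.1.flipBit ξ, flipBit_inJ hξ x.2⟩
  left_inv x := Subtype.ext (flipBit_flipBit x.1)
  right_inv x := Subtype.ext (flipBit_flipBit x.1)
  map_fun' := by
    intro n f xs
    match n, f with
    | 1, LFun.proj α => exact Subtype.ext (flipBit_restrict hξ (xs 0).1 α)
    | 1, LFun.add η h => exact Subtype.ext (flipBit_addMap hξ η h (xs 0))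
    | 0, f => exact f.elim
    | _ + 2, f => exact f.elim
  map_rel' := by
    intro n r xs
    match n, r with
    | 1, _ => exact Iff.rfl
    | 0, r => exact r.elim
    | _ + 2, r => exact r.elim

section Isolation

variable {L' : FirstOrder.Language.{u', v'}} {T' : L'.Theory} {M : Type w} [L'.Structure M]
  {A : Set M} {b : M}

theorem realize_snoc_apply_of_fixed {m : ℕ} {φ : L'.Formula (Fin (m + 1))} {a : Fin m → M}
    (σ : M ≃[L'] M) (hσ : ∀ i, σ (a i) = a i) (hφ : φ.Realize (Fin.snoc a b)) :
    φ.Realize (Fin.snoc a (σ b)) := by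
  have hcomp : σ ∘ Fin.snoc a b = Fin.snoc a (σ b) := by
    funext i
    refine Fin.lastCases ?_ (fun j => ?_) i <;> simp [hσ]
  rw [← hcomp]
  exact (StrongHomClass.realize_formula σ φ).2 hφ

theorem IsolatedOver.exists_params_funMap_eq (h : IsolatedOver T' A b) :
    ∃ (m : ℕ) (a : Fin m → M), (∀ i, a i ∈ A) ∧ ∀ σ : M ≃[L'] M, (∀ i, σ (a i) = a i) →
      ∀ (f : L'.Functions 1) (c : M), c ∈ A →
        Structure.funMap f ![b] = c → Structure.funMap f ![σ b] = c := by
  obtain ⟨m, a, φ, ha, hφ, hiso⟩ := h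
  refine ⟨m, a, ha, fun σ hσ f c hc hfc => ?_⟩
  let ψ : L'.Formula (Fin (m + 1 + 1)) :=
    (Term.func f ![Term.var (Fin.last _)]).equal (Term.var (Fin.castSucc (Fin.last m)))
  have hψ : ∀ y, ψ.Realize (Fin.snoc (Fin.append a ![c]) y) ↔ Structure.funMap f ![y] = c := by
    intro y
    have hargs : (fun i => (![Term.var (Fin.last (m + 1))] i : L'.Term _).realize
        (Fin.snoc (Fin.append a ![c]) y)) = ![y] := by
      funext i
      fin_cases i
      simp
    have hc' : Fin.append a ![c] (Fin.last m) = c := Fin.append_right a ![c] 0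
    simp only [ψ, Formula.realize_equal, Term.realize_func, Term.realize_var, Fin.snoc_castSucc,
      hargs, hc']
  exact (hψ _).1 (hiso 1 ![c] ψ (Fin.forall_fin_one.2 hc) ((hψ b).2 hfc) (σ b)
    (realize_snoc_apply_of_fixed σ hσ hφ))

end Isolation

theorem statement12_general {S : Set Ordinal.{0}} {ν : Ordinal.{0} → ℕ → Ordinal.{0}}
    (hS : IsStationaryBelow S)
    (hlad : IsLadderSystem S ν) :
    ¬ ∃ e : {o : Ordinal.{0} // o < ω₁} → J S ν, Function.Surjective e ∧
      ∀ β : {o : Ordinal.{0} // o < ω₁},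
        IsolatedOver (T S ν) (e '' {γ | γ.1 < β.1}) (e β) := by
  rintro ⟨e, hsurj, hiso⟩
  obtain ⟨δ, hδS, hδheight, hδenum⟩ := hS.exists_closed_under_enum hsurj
  have hex : ∃ γ, (e γ).1.len = ⊤ ∧ (e γ).1.ord = ν δ := by
    obtain ⟨γ, hγ⟩ := hsurj ⟨_, hlad.inJ_mk_top hδS (hS.1 hδS)⟩
    exact ⟨γ, by rw [hγ]; exact ⟨rfl, rfl⟩⟩
  obtain ⟨β, ⟨hβlen, hβord⟩, hβmin⟩ := wellFounded_lt.has_min _ hex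
  have hδβ : δ ≤ β.1 := not_lt.1 fun h => (hδheight β h).not_ge (hlad.le_height hδS hβord)
  obtain ⟨m, a, ha, hinv⟩ := (hiso β).exists_params_funMap_eq
  have hparam : ∀ i, ¬((a i).1.len = ⊤ ∧ (a i).1.ord = ν δ) := by
    rintro i hi
    obtain ⟨γ, hγ, hγa⟩ := ha i
    exact hβmin γ (hγa ▸ hi : (e γ).1.len = ⊤ ∧ (e γ).1.ord = ν δ) hγ
  obtain ⟨n, hn, hξ⟩ := ((eventually_all.2 fun i =>
    hlad.eventually_notMem_range_ord hδS (a i).2 (hparam i)).and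
    (hlad.eventually_notMem_of_finite hδS ((finite_singleton 0).subset inter_subset_left))).exists
  let σ : J S ν ≃[L S ν] J S ν := flipEquiv hξ
  let c : J S ν := ⟨(e β).1.restrict (n + 1 : ℕ), restrict_inJ S ν (e β).2 _⟩
  obtain ⟨γ, hγ, hγc⟩ := hδenum c (restrict_len_ne_top _ _) (hlad.height_restrict_lt hδS hβord n)
  have hσc := hinv σ (fun i => Subtype.ext (flipBit_eq_self (hn i)))
    (show (L S ν).Functions 1 from LFun.proj (n + 1 : ℕ)) c ⟨γ, hγ.trans_le hδβ, hγc⟩ rfl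
  exact flipBit_restrict_succ_ne (congrFun hβord n) (hβlen ▸ ENat.natCast_lt_top n)
    (congrArg Subtype.val hσc)

/-- `𝔄` is not a constructible model of `T = Th(𝔄)`: there is no
enumeration `(η^α : α < ω₁)` of `𝔄` in which the type of each element over its
predecessors is isolated. -/
theorem statement12 {S : Set Ordinal.{0}} {ν : Ordinal.{0} → ℕ → Ordinal.{0}}
    (hS : IsStationaryBelow S) (hlim : ∀ α ∈ S, Order.IsSuccLimit α)
    (hlad : IsLadderSystem S ν) :
    ¬ ∃ e : {o : Ordinal.{0} // o < ω₁} → J S ν, Function.Surjective e ∧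
      ∀ β : {o : Ordinal.{0} // o < ω₁},
        IsolatedOver (T S ν) (e '' {γ | γ.1 < β.1}) (e β) :=
  statement12_general hS hlad

end
end LadderPaper
end

section
/- Let T be a complete theory in a language of size ℵ₁ with atomic models. If α ∈ Spec_{K_T}(AP), A is an α-base, B ⊇ A is an atomic set, and p(x̄) ∈ S_at(A), then p(x̄) extends to a type in S_at(B). -/
namespace AbsPaper

open FirstOrder FirstOrder.Language Cardinal Set

universe u v

noncomputable section

/-! ### Set-theoretic preliminaries -/

/-- The first uncountable ordinal. -/
def ω₁ : Ordinal.{0} := (Cardinal.aleph 1).ord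

/-- `C` is a club (closed unbounded) subset of `ω₁`. -/
def IsClubBelow (C : Set Ordinal.{0}) : Prop :=
  C ⊆ Set.Iio ω₁ ∧ (∀ α < ω₁, ∃ β ∈ C, α ≤ β) ∧
    ∀ α < ω₁, Order.IsSuccLimit α → (∀ β < α, ∃ γ ∈ C, β ≤ γ ∧ γ < α) → α ∈ C

/-- `S` is a stationary subset of `ω₁`. -/
def IsStationaryBelow (S : Set Ordinal.{0}) : Prop :=
  S ⊆ Set.Iio ω₁ ∧ ∀ C, IsClubBelow C → (S ∩ C).Nonempty

/-- The weak diamond `Φ(S)`: for every `F : 2^{<ω₁} → 2` there is `g : ω₁ → 2` such that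
for every `f : ω₁ → 2` the set `{α ∈ S : F(f↾α) = g(α)}` is stationary. -/
def WeakDiamond (S : Set Ordinal.{0}) : Prop :=
  ∀ F : (α : Ordinal.{0}) → ((Set.Iio α) → Bool) → Bool,
    ∃ g : Ordinal.{0} → Bool, ∀ f : Ordinal.{0} → Bool,
      IsStationaryBelow {α | α ∈ S ∧ F α (fun β => f β.1) = g α}

/-- `Φ*`: the weak diamond holds on every stationary subset of `ω₁`. -/
def WeakDiamondStar : Prop :=
  ∀ S : Set Ordinal.{0}, IsStationaryBelow S → WeakDiamond S

/-- `cov(meager)`: the least number of closed nowhere dense sets needed to cover Cantor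
space `2^ω`. -/
def covMeager : Cardinal.{0} :=
  sInf {κ : Cardinal.{0} | ∃ (ι : Type) (C : ι → Set (ℕ → Bool)),
    #ι = κ ∧ (∀ i, IsClosed (C i) ∧ IsNowhereDense (C i)) ∧ (⋃ i, C i) = Set.univ}

/-! ### Sublanguages and filtrations -/

variable {L : FirstOrder.Language.{u, v}}

/-- A sublanguage of `L`, given by sets of function and relation symbols. -/
structure Sublanguage (L : FirstOrder.Language.{u, v}) where
  funs : ∀ n, Set (L.Functions n)
  rels : ∀ n, Set (L.Relations n)

/-- The sublanguage as a language in its own right. -/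
def Sublanguage.lang (Sl : Sublanguage L) : FirstOrder.Language.{u, v} :=
  ⟨fun n => ↥(Sl.funs n), fun n => ↥(Sl.rels n)⟩

/-- The inclusion of a sublanguage into `L`. -/
def Sublanguage.hom (Sl : Sublanguage L) : Sl.lang →ᴸ L :=
  ⟨fun _ f => f.1, fun _ r => r.1⟩

/-- `Sl` is countable. -/
def Sublanguage.Countable' (Sl : Sublanguage L) : Prop :=
  (∀ n, (Sl.funs n).Countable) ∧ ∀ n, (Sl.rels n).Countable

/-- `Sl ≤ Sl'` as sublanguages. -/
def Sublanguage.le (Sl Sl' : Sublanguage L) : Prop :=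
  (∀ n, Sl.funs n ⊆ Sl'.funs n) ∧ ∀ n, Sl.rels n ⊆ Sl'.rels n

/-- `φ` is a formula of the sublanguage `Sl` (a bounded formula all of whose symbols lie
in `Sl`). -/
def Sublanguage.IsBForm (Sl : Sublanguage L) {β : Type*} {k : ℕ}
    (φ : L.BoundedFormula β k) : Prop :=
  ∃ ψ : Sl.lang.BoundedFormula β k, Sl.hom.onBoundedFormula ψ = φ

/-- A decomposition `L = ⋃_{α<ω₁} L_α` of `L` as a continuous increasing union of
countable sublanguages. -/
structure Filtration (L : FirstOrder.Language.{u, v}) where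
  sub : Ordinal.{0} → Sublanguage L
  mono : ∀ {α β : Ordinal.{0}}, α ≤ β → (sub α).le (sub β)
  continuous : ∀ α : Ordinal.{0}, Order.IsSuccLimit α →
    (∀ n, (sub α).funs n = ⋃ β < α, (sub β).funs n) ∧
      ∀ n, (sub α).rels n = ⋃ β < α, (sub β).rels n
  countable : ∀ α < ω₁, (sub α).Countable'
  covers : (∀ n (f : L.Functions n), ∃ α < ω₁, f ∈ (sub α).funs n) ∧
    ∀ n (r : L.Relations n), ∃ α < ω₁, r ∈ (sub α).rels n

/-! ### Complete formulas and suitable clubs -/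

variable (T : L.Theory)

/-- `φ` is a `T`-complete formula: consistent with `T`, and `T + φ` decides every
formula. -/
def TComplete {β : Type*} (φ : L.Formula β) : Prop :=
  ¬(T ⊨ᵇ φ.not) ∧ ∀ ψ : L.Formula β, (T ⊨ᵇ φ.imp ψ) ∨ (T ⊨ᵇ φ.imp ψ.not)

/-- `C₀` is a suitable club for `T` and the filtration `F`:  for `α ∈ C₀`, every
`L_α`-formula consistent with `T` extends to a `T`-complete `L_α`-formula. -/
def SuitableClub (F : Filtration L) (C₀ : Set Ordinal.{0}) : Prop :=
  IsClubBelow C₀ ∧ ∀ α ∈ C₀, ∀ (n : ℕ) (φ : L.Formula (Fin n)), (F.sub α).IsBForm φ →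
    ¬(T ⊨ᵇ φ.not) →
      ∃ ψ : L.Formula (Fin n), (F.sub α).IsBForm ψ ∧ TComplete T ψ ∧ (T ⊨ᵇ ψ.imp φ)

/-! ### Atomic sets and bases -/

variable {M : Type w} [L.Structure M]

/-- `φ` isolates the type of the tuple `a` (with respect to `T`). -/
def IsolTp {n : ℕ} (a : Fin n → M) (φ : L.Formula (Fin n)) : Prop :=
  φ.Realize a ∧ ∀ ψ : L.Formula (Fin n), ψ.Realize a → T ⊨ᵇ φ.imp ψ

/-- An atomic set: a countable set all of whose finite tuples have isolated types. -/
def IsAtomicSet (A : Set M) : Prop :=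
  A.Countable ∧ ∀ (n : ℕ) (a : Fin n → M), (∀ i, a i ∈ A) →
    ∃ φ : L.Formula (Fin n), IsolTp T a φ

/-- An `Sl`-atomic set: the isolating formulas can be chosen in the sublanguage `Sl`. -/
def IsAtomicSetIn (Sl : Sublanguage L) (A : Set M) : Prop :=
  A.Countable ∧ ∀ (n : ℕ) (a : Fin n → M), (∀ i, a i ∈ A) →
    ∃ φ : L.Formula (Fin n), Sl.IsBForm φ ∧ IsolTp T a φ

/-- `A` is closed under the `Sl`-functions of `M`. -/
def IsClosedIn (Sl : Sublanguage L) (A : Set M) : Prop :=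
  ∀ (n : ℕ) (f : L.Functions n), f ∈ Sl.funs n → ∀ a : Fin n → M, (∀ i, a i ∈ A) →
    Structure.funMap f a ∈ A

/-- The `Sl`-reduct of `A` is an elementary submodel of the `Sl`-reduct of `M`
(Tarski–Vaught). -/
def IsElemIn (Sl : Sublanguage L) (A : Set M) : Prop :=
  IsClosedIn Sl A ∧
    ∀ (n : ℕ) (φ : L.BoundedFormula (Fin n) 1), Sl.IsBForm φ →
      ∀ a : Fin n → M, (∀ i, a i ∈ A) → (∃ b : M, φ.Realize a fun _ => b) →
        ∃ b ∈ A, φ.Realize a fun _ => b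

/-- An `α`-base: an `α`-atomic set whose `L_α`-reduct is elementary in `M`. -/
def IsBaseAt (F : Filtration L) (α : Ordinal.{0}) (A : Set M) : Prop :=
  IsAtomicSetIn T (F.sub α) A ∧ IsElemIn (F.sub α) A

/-! ### Types over a set -/

/-- The assignment interpreting parameters from `A` by themselves. -/
def paramAssign (A : Set M) {n : ℕ} (b : Fin n → M) : ↥A ⊕ Fin n → M :=
  Sum.elim Subtype.val b

/-- The type of the tuple `b` over `A`. -/
def tpOver (A : Set M) {n : ℕ} (b : Fin n → M) : Set (L.Formula (↥A ⊕ Fin n)) :=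
  {φ | φ.Realize (paramAssign A b)}

/-- A complete `n`-type over `A`, finitely satisfiable in `M` (equivalently, consistent
with the complete theory of `M` with constants for `A`). -/
def IsTypeOver (A : Set M) (n : ℕ) (p : Set (L.Formula (↥A ⊕ Fin n))) : Prop :=
  (∀ φ : L.Formula (↥A ⊕ Fin n), φ ∈ p ∨ φ.not ∈ p) ∧
    ∀ fs : Finset (L.Formula (↥A ⊕ Fin n)), ↑fs ⊆ p →
      ∃ b : Fin n → M, ∀ φ ∈ fs, φ.Realize (paramAssign A b)

/-- `φ` isolates the set of formulas `p` over `T`. -/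
def IsolatesSet {β : Type*} (φ : L.Formula β) (p : Set (L.Formula β)) : Prop :=
  φ ∈ p ∧ ∀ ψ ∈ p, T ⊨ᵇ φ.imp ψ

/-- The `∅`-type in variables `Fin m ⊕ Fin n` obtained from `p` by plugging the
parameters `a ∈ A^m` into the first block of variables. -/
def restrTp (A : Set M) {n m : ℕ} (p : Set (L.Formula (↥A ⊕ Fin n))) (a : Fin m → ↥A) :
    Set (L.Formula (Fin m ⊕ Fin n)) :=
  {ψ | ψ.relabel (Sum.elim (fun i => Sum.inl (a i)) Sum.inr) ∈ p}

/-- `p ∈ S^n_{at}(A)`:  `p` is a complete type over `A` all of whose realizations keep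
`A` atomic, i.e. every finite tuple from `A` together with the realization has isolated
type. -/
def IsAtomicType (A : Set M) {n : ℕ} (p : Set (L.Formula (↥A ⊕ Fin n))) : Prop :=
  IsTypeOver A n p ∧ ∀ (m : ℕ) (a : Fin m → ↥A),
    ∃ φ : L.Formula (Fin m ⊕ Fin n), IsolatesSet T φ (restrTp A p a)

/-- `p ∈ S^{n,β}_{at}(A)` (for `Sl = L_β`): the isolating formulas can be chosen in
`Sl`. -/
def IsAtomicTypeIn (Sl : Sublanguage L) (A : Set M) {n : ℕ}
    (p : Set (L.Formula (↥A ⊕ Fin n))) : Prop :=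
  IsTypeOver A n p ∧ ∀ (m : ℕ) (a : Fin m → ↥A),
    ∃ φ : L.Formula (Fin m ⊕ Fin n), Sl.IsBForm φ ∧ IsolatesSet T φ (restrTp A p a)

/-- The space `S^n_{at}(A)`. -/
def SnAt (A : Set M) (n : ℕ) : Set (Set (L.Formula (↥A ⊕ Fin n))) :=
  {p | IsAtomicType T A p}

/-- The space `S^{n,β}_{at}(A)`. -/
def SnAtIn (Sl : Sublanguage L) (A : Set M) (n : ℕ) : Set (Set (L.Formula (↥A ⊕ Fin n))) :=
  {p | IsAtomicTypeIn T Sl A p}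

/-- The topology on `S^n_{at}(A)`, generated by the basic (cl)open sets `[φ]`. -/
instance topSnAt (A : Set M) (n : ℕ) : TopologicalSpace ↥(SnAt T A n) :=
  TopologicalSpace.generateFrom
    {U | ∃ φ : L.Formula (↥A ⊕ Fin n), U = {p : ↥(SnAt T A n) | φ ∈ p.1}}

/-! ### Total transcendence -/

/-- `K_T` is totally transcendental at `α`: for any model and any `α`-base `A` in it, the
space `S_{at}(A) = ⋃_n S^n_{at}(A)` is scattered (has no nonempty perfect subset). -/
def TTat (F : Filtration L) (α : Ordinal.{0}) : Prop :=
  ∀ (M' : Type (max u v)) [L.Structure M'], M' ⊨ T →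
    ∀ A : Set M', IsBaseAt T F α A →
      ∀ C : Set (Σ n : ℕ, ↥(SnAt T A n)), Perfect C → C = ∅

/-- The set of `α ∈ C₀` at which `K_T` is totally transcendental contains a club. -/
def ClubTT (F : Filtration L) (C₀ : Set Ordinal.{0}) : Prop :=
  ∃ C, IsClubBelow C ∧ C ⊆ C₀ ∧ ∀ α ∈ C, TTat T F α

/-- `K_T` is club totally transcendental. -/
def IsClubTT : Prop :=
  ∃ (F : Filtration L) (C₀ : Set Ordinal.{0}), SuitableClub T F C₀ ∧ ClubTT T F C₀

/-! ### Atomic, constructible models; the conclusion of the main theorem -/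

/-- `φ` isolates the type of the tuple `a` over `∅`, and `M` is atomic. -/
def IsAtomicModel (N : Type w) [L.Structure N] : Prop :=
  N ⊨ T ∧ ∀ (n : ℕ) (a : Fin n → N), ∃ φ : L.Formula (Fin n),
    φ.Realize a ∧ ∀ ψ : L.Formula (Fin n), ψ.Realize a → T ⊨ᵇ φ.imp ψ

/-- The type of `b` over the parameter set `A ⊆ N` is isolated (by a single formula with
finitely many parameters from `A`). -/
def IsolatedOver (T' : L.Theory) {N : Type w} [L.Structure N] (A : Set N) (b : N) : Prop :=
  ∃ (m : ℕ) (a : Fin m → N) (φ : L.Formula (Fin (m + 1))),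
    (∀ i, a i ∈ A) ∧ φ.Realize (Fin.snoc a b) ∧
      ∀ (k : ℕ) (c : Fin k → N) (ψ : L.Formula (Fin (m + k + 1))), (∀ i, c i ∈ A) →
        ψ.Realize (Fin.snoc (Fin.append a c) b) →
          ∀ b' : N, φ.Realize (Fin.snoc a b') → ψ.Realize (Fin.snoc (Fin.append a c) b')

/-- `N` is a constructible model of `T`. -/
def IsConstructible (N : Type w) [L.Structure N] : Prop :=
  N ⊨ T ∧ ∃ (δ : Ordinal.{w}) (e : {o : Ordinal.{w} // o < δ} → N), Function.Surjective e ∧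
    ∀ β : {o : Ordinal.{w} // o < δ}, IsolatedOver T (e '' {γ | γ.1 < β.1}) (e β)

/-- `T` has `2^{ℵ₁}` pairwise non-isomorphic atomic models of size `ℵ₁`. -/
def HasManyAtomicModels : Prop :=
  ∃ (ι : Type (max u v)) (Ms : ι → Theory.ModelType.{u, v, max u v} T),
    #ι = 2 ^ Cardinal.aleph 1 ∧
    (∀ i, IsAtomicModel T (Ms i) ∧ #(Ms i) = Cardinal.aleph 1) ∧
    ∀ i j, i ≠ j → IsEmpty ((Ms i) ≃[L] (Ms j))


/-! ### Amalgamation -/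

/-- `g` is a partial elementary map defined on `A`. -/
def PartElem {N : Type*} [L.Structure N] (A : Set M) (g : ↥A → N) : Prop :=
  ∀ (n : ℕ) (φ : L.Formula (Fin n)) (a : Fin n → ↥A),
    φ.Realize (fun i => (a i : M)) ↔ φ.Realize fun i => g (a i)

/-- `K_T` has the amalgamation property at `α`: any two atomic sets over an `α`-base can
be amalgamated into an atomic set (inside some model of `T`) by elementary maps agreeing
on the base. -/
def APat (F : Filtration L) (α : Ordinal.{0}) : Prop :=
  ∀ (M' : Type (max u v)) [L.Structure M'], M' ⊨ T →
    ∀ A₀ A₁ A₂ : Set M', IsBaseAt T F α A₀ → IsAtomicSet T A₁ → IsAtomicSet T A₂ →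
      (h1 : A₀ ⊆ A₁) → (h2 : A₀ ⊆ A₂) →
      ∃ (N : Theory.ModelType.{u, v, max u v} T) (f₁ : ↥A₁ → N) (f₂ : ↥A₂ → N),
        PartElem (L := L) A₁ f₁ ∧ PartElem (L := L) A₂ f₂ ∧
        (∀ (a : M') (ha : a ∈ A₀), f₁ ⟨a, h1 ha⟩ = f₂ ⟨a, h2 ha⟩) ∧
        IsAtomicSet T (Set.range f₁ ∪ Set.range f₂)

/-! ### Density of isolated types -/

/-- The isolated points are dense in each `S^n_{at}(A)`. -/
def IsolDense (A : Set M) : Prop :=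
  ∀ n : ℕ, Dense {p : ↥(SnAt T A n) | IsOpen ({p} : Set ↥(SnAt T A n))}

/-- `α ∈ Spec_{K_T}(CS)`: the isolated types are dense in `S_{at}(A)` for any `α`-base
`A` (in any model of `T`). -/
def CSat (F : Filtration L) (α : Ordinal.{0}) : Prop :=
  ∀ (M' : Type (max u v)) [L.Structure M'], M' ⊨ T →
    ∀ A : Set M', IsBaseAt T F α A → IsolDense T A

/-! Realize `p` by a tuple `c` in an elementary extension `N` of `M`. As `p` is atomic, `A ∪ c`
is an atomic set containing the `α`-base `A`, so amalgamating `B` and `A ∪ c` over `A` gives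
elementary maps `f₁ : B → N'` and `f₂ : A ∪ c → N'` that agree on `A` and have atomic joint
image. The type of `f₂ c` over `f₁ B`, pulled back to `B`, is finitely satisfiable in `M` because
`f₁` is elementary, is atomic because the joint image is, and extends `p` because `f₁` and `f₂`
agree on `A`. -/

section AtomicTypeExtension

variable {T}

def tpOf (L : FirstOrder.Language.{u, v}) {β P : Type*} [L.Structure P] (v : β → P) :
    Set (L.Formula β) :=
  {φ | φ.Realize v}

@[simp]
theorem mem_tpOf {β P : Type*} [L.Structure P] {v : β → P} {φ : L.Formula β} :
    φ ∈ tpOf L v ↔ φ.Realize v :=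
  Iff.rfl

theorem eq_tpOf_of_complete {β P : Type*} [L.Structure P] {p : Set (L.Formula β)} {v : β → P}
    (hcomp : ∀ φ, φ ∈ p ∨ φ.not ∈ p) (hv : ∀ φ ∈ p, φ.Realize v) : p = tpOf L v := by
  ext φ
  exact ⟨hv φ, fun h => (hcomp φ).resolve_right fun hn => Formula.realize_not.1 (hv _ hn) h⟩

theorem realize_iff_realize_relabel_equivFin {γ P : Type*} [L.Structure P] [DecidableEq γ]
    (φ : L.Formula γ) (w : γ → P) :
    φ.Realize w ↔ (Formula.relabel (Fintype.equivFin _) (φ.restrictFreeVar id)).Realize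
      (w ∘ (↑) ∘ (Fintype.equivFin φ.freeVarFinset).symm) := by
  rw [Formula.realize_relabel, Function.comp_assoc, Function.comp_assoc,
    Equiv.symm_comp_self, Function.comp_id]
  exact (BoundedFormula.realize_restrictFreeVar (φ := φ) (f := id) (v := w ∘ (↑)) w
    fun _ => rfl).symm

theorem realize_iff_of_forall_fin {γ P₁ P₂ : Type*} [L.Structure P₁] [L.Structure P₂]
    {w₁ : γ → P₁} {w₂ : γ → P₂}
    (h : ∀ (k : ℕ) (ψ : L.Formula (Fin k)) (g : Fin k → γ),
      ψ.Realize (w₁ ∘ g) ↔ ψ.Realize (w₂ ∘ g))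
    (φ : L.Formula γ) : φ.Realize w₁ ↔ φ.Realize w₂ := by
  classical
  rw [realize_iff_realize_relabel_equivFin φ w₁, realize_iff_realize_relabel_equivFin φ w₂]
  exact h _ _ _

variable {N : Type*} [L.Structure N]

theorem PartElem.realize_iff {A : Set M} {g : ↥A → N} (hg : PartElem (L := L) A g) {γ : Type*}
    (φ : L.Formula γ) (v : γ → ↥A) : φ.Realize (Subtype.val ∘ v) ↔ φ.Realize (g ∘ v) :=
  realize_iff_of_forall_fin (w₁ := Subtype.val ∘ v) (w₂ := g ∘ v)
    (fun k ψ g' => hg k ψ (v ∘ g')) φ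

theorem PartElem.isTypeOver_tpOf {A : Set M} {g : ↥A → N} (hg : PartElem (L := L) A g) {n : ℕ}
    (c : Fin n → N) : IsTypeOver A n (tpOf L (Sum.elim g c)) := by
  refine ⟨fun φ => (em (φ.Realize (Sum.elim g c))).imp id Formula.realize_not.2,
    fun fs hfs => ?_⟩
  let χ : L.Formula (↥A ⊕ Fin n) := Formula.iInf fun φ : ↥fs => φ.1
  have hχ : (χ.iExs (Fin n)).Realize g :=
    Formula.realize_iExs.2 ⟨c, Formula.realize_iInf.2 fun φ => hfs φ.2⟩
  obtain ⟨b, hb⟩ := Formula.realize_iExs.1 ((hg.realize_iff (χ.iExs (Fin n)) id).2 hχ)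
  exact ⟨b, fun φ hφ => Formula.realize_iInf.1 hb ⟨φ, hφ⟩⟩

def existsComp {β γ : Type*} [Finite β] [Finite γ] (φ : L.Formula β) (ρ : γ → β) :
    L.Formula γ :=
  (φ.relabel Sum.inr ⊓ Formula.iInf fun i : γ =>
    Term.equal (Term.var (Sum.inl i)) (Term.var (Sum.inr (ρ i)))).iExs β

theorem realize_existsComp {β γ : Type*} [Finite β] [Finite γ] {φ : L.Formula β} {ρ : γ → β}
    {v : γ → N} : (existsComp φ ρ).Realize v ↔ ∃ w, φ.Realize w ∧ w ∘ ρ = v := by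
  simp only [existsComp, Formula.realize_iExs, Formula.realize_inf, Formula.realize_relabel,
    Formula.realize_iInf, Formula.realize_equal, Term.realize_var, Sum.elim_inl, Sum.elim_inr,
    Sum.elim_comp_inr, funext_iff, Function.comp_apply, eq_comm]

theorem IsolatesSet.existsComp {β γ : Type*} [Finite β] [Finite γ] {φ : L.Formula β}
    {u : β → N} (h : IsolatesSet T φ (tpOf L u)) (ρ : γ → β) :
    IsolatesSet T (existsComp φ ρ) (tpOf L (u ∘ ρ)) := by
  refine ⟨realize_existsComp.2 ⟨u, h.1, rfl⟩, fun ψ hψ => ?_⟩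
  have hT := h.2 (ψ.relabel ρ) (Formula.realize_relabel.2 hψ)
  refine Theory.models_formula_iff.2 fun P v => ?_
  rw [Formula.realize_imp, realize_existsComp]
  rintro ⟨w, hw, rfl⟩
  exact Formula.realize_relabel.1 (Formula.realize_imp.1 (hT.realize_formula P) hw)

theorem IsAtomicSet.exists_isolatesSet {S : Set N} (hS : IsAtomicSet T S) {β : Type*}
    [Finite β] {u : β → N} (hu : ∀ i, u i ∈ S) : ∃ φ : L.Formula β, IsolatesSet T φ (tpOf L u) := by
  obtain ⟨k, ⟨e⟩⟩ := Finite.exists_equiv_fin β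
  obtain ⟨φ, hφ⟩ := hS.2 k (u ∘ e.symm) fun i => hu _
  have := IsolatesSet.existsComp (u := u ∘ e.symm) hφ e
  rw [Function.comp_assoc, e.symm_comp_self, Function.comp_id] at this
  exact ⟨_, this⟩

theorem restrTp_tpOf {X : Type*} {A : Set X} {n m : ℕ} (e : ↥A ⊕ Fin n → N) (a : Fin m → ↥A) :
    restrTp A (tpOf L e) a = tpOf L (e ∘ Sum.elim (fun i => Sum.inl (a i)) Sum.inr) := by
  ext ψ
  exact Formula.realize_relabel

theorem isAtomicType_tpOf {A : Set M} {n : ℕ} {e : ↥A ⊕ Fin n → N}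
    (htp : IsTypeOver A n (tpOf L e)) {S : Set N} (hS : IsAtomicSet T S) (he : ∀ x, e x ∈ S) :
    IsAtomicType T A (tpOf L e) :=
  ⟨htp, fun m a => by rw [restrTp_tpOf]; exact hS.exists_isolatesSet fun _ => he _⟩

theorem exists_factor_through_sumElim {α : Type*} {k n : ℕ} (σ : Fin k → α ⊕ Fin n) :
    ∃ (m : ℕ) (a : Fin m → α) (ρ : Fin k → Fin m ⊕ Fin n),
      Sum.elim (fun i => Sum.inl (a i)) Sum.inr ∘ ρ = σ := by
  rcases isEmpty_or_nonempty α with hα | hα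
  · refine ⟨0, Fin.elim0, fun i => Sum.inr ((σ i).elim isEmptyElim id), funext fun i => ?_⟩
    rcases h : σ i with x | t
    · exact isEmptyElim x
    · simp [h]
  · obtain ⟨a₀⟩ := hα
    refine ⟨k, fun i => (σ i).elim id fun _ => a₀,
      fun i => (σ i).elim (fun _ => Sum.inl i) Sum.inr, funext fun i => ?_⟩
    rcases h : σ i with x | t <;> simp [h]

theorem IsAtomicType.isAtomicSet_range {A : Set M} (hA : A.Countable) {n : ℕ}
    {e : ↥A ⊕ Fin n → N} (hp : IsAtomicType T A (tpOf L e)) : IsAtomicSet T (range e) := by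
  have := hA.to_subtype
  refine ⟨countable_range e, fun k d hd => ?_⟩
  choose σ hσ using hd
  obtain rfl : e ∘ σ = d := funext hσ
  obtain ⟨m, a, ρ, rfl⟩ := exists_factor_through_sumElim σ
  obtain ⟨φ, hφ⟩ := hp.2 m a
  rw [restrTp_tpOf] at hφ
  exact ⟨_, hφ.existsComp ρ⟩

theorem exists_comp_eq_of_forall_mem_image {X Y ι : Type*} {f : X → Y} {S : Set X} {b : ι → Y}
    (h : ∀ i, b i ∈ f '' S) : ∃ a : ι → X, (∀ i, a i ∈ S) ∧ f ∘ a = b := by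
  choose a haS hab using h
  exact ⟨a, haS, funext hab⟩

section ElementaryEmbedding

variable (j : M ↪ₑ[L] N)

theorem IsolTp.map {n : ℕ} {a : Fin n → M} {φ : L.Formula (Fin n)} (h : IsolTp T a φ) :
    IsolTp T (j ∘ a) φ :=
  ⟨(j.map_formula φ a).2 h.1, fun ψ hψ => h.2 ψ ((j.map_formula ψ a).1 hψ)⟩

theorem IsAtomicSet.image {S : Set M} (hS : IsAtomicSet T S) : IsAtomicSet T (j '' S) := by
  refine ⟨hS.1.image j, fun k b hb => ?_⟩
  obtain ⟨a, haS, rfl⟩ := exists_comp_eq_of_forall_mem_image hb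
  obtain ⟨φ, hφ⟩ := hS.2 k a haS
  exact ⟨φ, hφ.map j⟩

theorem IsAtomicSetIn.image {Sl : Sublanguage L} {S : Set M} (hS : IsAtomicSetIn T Sl S) :
    IsAtomicSetIn T Sl (j '' S) := by
  refine ⟨hS.1.image j, fun k b hb => ?_⟩
  obtain ⟨a, haS, rfl⟩ := exists_comp_eq_of_forall_mem_image hb
  obtain ⟨φ, hSl, hφ⟩ := hS.2 k a haS
  exact ⟨φ, hSl, hφ.map j⟩

theorem IsClosedIn.image {Sl : Sublanguage L} {S : Set M} (hS : IsClosedIn Sl S) :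
    IsClosedIn Sl (j '' S) := by
  intro k f hf b hb
  obtain ⟨a, haS, rfl⟩ := exists_comp_eq_of_forall_mem_image hb
  rw [← j.map_fun]
  exact mem_image_of_mem j (hS k f hf a haS)

theorem IsElemIn.image {Sl : Sublanguage L} {S : Set M} (hS : IsElemIn Sl S) :
    IsElemIn Sl (j '' S) := by
  refine ⟨hS.1.image j, fun k φ hφ b hb hex => ?_⟩
  obtain ⟨a, haS, rfl⟩ := exists_comp_eq_of_forall_mem_image hb
  have hexM : ∃ x : M, φ.Realize a fun _ => x := by
    obtain ⟨y, hy⟩ := hex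
    have hexN : (BoundedFormula.ex φ).Realize (j ∘ a) (j ∘ default) :=
      BoundedFormula.realize_ex.2 ⟨y, hy⟩
    exact BoundedFormula.realize_ex.1 ((j.map_boundedFormula _ a default).1 hexN)
  obtain ⟨x, hxS, hx⟩ := hS.2 k φ hφ a haS hexM
  exact ⟨j x, mem_image_of_mem j hxS, (j.map_boundedFormula φ a fun _ => x).2 hx⟩

theorem IsBaseAt.image {F : Filtration L} {α : Ordinal.{0}} {A : Set M}
    (hA : IsBaseAt T F α A) : IsBaseAt T F α (j '' A) :=
  ⟨hA.1.image j, hA.2.image j⟩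

end ElementaryEmbedding

theorem exists_elementaryEmbedding_realize {M : Type (max u v)} [L.Structure M] {A : Set M}
    {n : ℕ} {p : Set (L.Formula (↥A ⊕ Fin n))}
    (hp : ∀ fs : Finset (L.Formula (↥A ⊕ Fin n)), ↑fs ⊆ p →
      ∃ b : Fin n → M, ∀ φ ∈ fs, φ.Realize (paramAssign A b)) :
    ∃ (N : Type (max u v)) (_ : L.Structure N) (j : M ↪ₑ[L] N) (c : Fin n → N),
      ∀ φ ∈ p, φ.Realize (Sum.elim (j ∘ Subtype.val) c) := by
  classical
  rcases isEmpty_or_nonempty M with hM | hM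
  · obtain ⟨b₀, -⟩ := hp ∅ (by simp)
    refine ⟨M, inferInstance, ElementaryEmbedding.refl L M, b₀, fun φ hφ => ?_⟩
    obtain ⟨b, hb⟩ := hp {φ} (by simpa using hφ)
    rw [Subsingleton.elim (Sum.elim _ b₀) (paramAssign A b)]
    exact hb φ (Finset.mem_singleton_self φ)
  -- The elementary diagram of `M` and the type `p`, with constants for `M ⊕ Fin n`.
  let D : Set (L.Formula (M ⊕ Fin n)) := Formula.relabel Sum.inl '' {ψ | ψ.Realize id}
  let P : Set (L.Formula (M ⊕ Fin n)) := Formula.relabel (Sum.map Subtype.val id) '' p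
  obtain ⟨N⟩ : Theory.IsSatisfiable (Formula.equivSentence '' (D ∪ P)) := by
    refine Theory.isSatisfiable_iff_isFinitelySatisfiable.2 fun T₀ hT₀ => ?_
    obtain ⟨s, hsDP, rfl⟩ := Finset.subset_set_image_iff.1 hT₀
    obtain ⟨fs, hfs, hfsP⟩ := Finset.subset_set_image_iff.1
      (show ↑(s.filter (· ∈ P)) ⊆ P from fun χ hχ => (Finset.mem_filter.1 hχ).2)
    obtain ⟨b, hb⟩ := hp fs hfs
    let := constantsOn.structure (Sum.elim id b : M ⊕ Fin n → M)
    have : M ⊨ (↑(s.image Formula.equivSentence) : L[[M ⊕ Fin n]].Theory) := by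
      refine (Theory.model_iff _).2 fun _ hχ => ?_
      obtain ⟨χ, hχs, rfl⟩ := Finset.mem_image.1 hχ
      refine (Formula.realize_equivSentence M χ).2 ?_
      rcases hsDP hχs with ⟨ψ, hψ, rfl⟩ | hP
      · exact Formula.realize_relabel.2 hψ
      · obtain ⟨φ, hφ, rfl⟩ := Finset.mem_image.1 (hfsP ▸ Finset.mem_filter.2 ⟨hχs, hP⟩)
        rw [Formula.realize_relabel]
        convert hb φ hφ using 1
        ext (_ | _) <;> rfl
    exact Theory.Model.isSatisfiable M
  let : L.Structure N := (L.lhomWithConstants (M ⊕ Fin n)).reduct N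
  have : (L.lhomWithConstants (M ⊕ Fin n)).IsExpansionOn N := LHom.isExpansionOn_reduct _ _
  let jc : M ⊕ Fin n → N := fun x => (L.con x : N)
  have hreal : ∀ χ ∈ D ∪ P, χ.Realize jc := fun χ hχ =>
    (Formula.realize_equivSentence N χ).1
      (Theory.realize_sentence_of_mem _ (mem_image_of_mem _ hχ))
  have hD : ∀ ψ : L.Formula M, ψ.Realize id → ψ.Realize (jc ∘ Sum.inl) := fun ψ hψ =>
    Formula.realize_relabel.1 (hreal _ (Or.inl ⟨ψ, hψ, rfl⟩))
  let j : M ↪ₑ[L] N :=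
    ⟨jc ∘ Sum.inl, fun k φ x => ⟨fun h => by_contra fun hn => Formula.realize_not.1
      (Formula.realize_relabel.1 (hD _ (Formula.realize_relabel.2 (Formula.realize_not.2 hn)))) h,
      fun h => Formula.realize_relabel.1 (hD _ (Formula.realize_relabel.2 h))⟩⟩
  refine ⟨N, inferInstance, j, jc ∘ Sum.inr, fun φ hφ => ?_⟩
  have hφN := Formula.realize_relabel.1 (hreal _ (Or.inr ⟨φ, hφ, rfl⟩))
  convert hφN using 1
  ext (_ | _) <;> rfl

end AtomicTypeExtension

theorem statement16_general {L : FirstOrder.Language.{u, v}} (T : L.Theory)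
    (F : Filtration L)
    (α : Ordinal.{0}) (hAP : APat T F α)
    (M : Type (max u v)) [L.Structure M] (hM : M ⊨ T)
    (A B : Set M) (hA : IsBaseAt T F α A) (hB : IsAtomicSet T B) (hAB : A ⊆ B)
    (n : ℕ) (p : Set (L.Formula (↥A ⊕ Fin n))) (hp : IsAtomicType T A p) :
    ∃ q : Set (L.Formula (↥B ⊕ Fin n)), IsAtomicType T B q ∧
      ∀ φ : L.Formula (↥A ⊕ Fin n),
        φ ∈ p ↔ φ.relabel (Sum.map (Set.inclusion hAB) id) ∈ q := by
  obtain ⟨N, _, j, c, hc⟩ := exists_elementaryEmbedding_realize hp.1.2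
  set e : ↥A ⊕ Fin n → N := Sum.elim (j ∘ Subtype.val) c
  obtain rfl : p = tpOf L e := eq_tpOf_of_complete hp.1.1 hc
  have hA₀ : j '' A ⊆ range e := by
    rintro _ ⟨a, ha, rfl⟩
    exact ⟨Sum.inl ⟨a, ha⟩, rfl⟩
  obtain ⟨N', f₁, f₂, hf₁, hf₂, hagree, hatom⟩ :=
    hAP N ((j.theory_model_iff T).1 hM) (j '' A) (j '' B) (range e) (hA.image j) (hB.image j)
      (hp.isAtomicSet_range hA.1.1) (image_mono hAB) hA₀
  let g : ↥B → N' := fun b => f₁ ⟨j b, mem_image_of_mem j b.2⟩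
  let c' : Fin n → N' := fun i => f₂ ⟨e (Sum.inr i), mem_range_self _⟩
  have hg : PartElem (L := L) B g := fun k φ b =>
    (j.map_formula φ _).symm.trans (hf₁ k φ fun i => ⟨j (b i), mem_image_of_mem j (b i).2⟩)
  refine ⟨tpOf L (Sum.elim g c'), isAtomicType_tpOf (hg.isTypeOver_tpOf c') hatom ?_,
    fun φ => ?_⟩
  · rintro (b | i)
    · exact Or.inl (mem_range_self _)
    · exact Or.inr (mem_range_self _)
  · have hext : Sum.elim g c' ∘ Sum.map (inclusion hAB) id = f₂ ∘ rangeFactorization e := by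
      ext (a | i)
      · exact hagree (j a) (mem_image_of_mem j a.2)
      · rfl
    rw [mem_tpOf, mem_tpOf, Formula.realize_relabel, hext, ← hf₂.realize_iff φ]
    rfl

/-- If `α ∈ Spec_{K_T}(AP)`, `A` is an `α`-base, `B ⊇ A` is an atomic
set, and `p ∈ S_{at}(A)`, then `p` extends to a type in `S_{at}(B)`. -/
theorem statement16 {L : FirstOrder.Language.{u, v}} (T : L.Theory)
    (hcomp : T.IsComplete) (hcard : L.card = Cardinal.aleph 1)
    (hatomic : ∃ N : Theory.ModelType.{u, v, max u v} T, IsAtomicModel T N)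
    (F : Filtration L) (C₀ : Set Ordinal.{0}) (hsuit : SuitableClub T F C₀)
    (α : Ordinal.{0}) (hα : α ∈ C₀) (hAP : APat T F α)
    (M : Type (max u v)) [L.Structure M] (hM : M ⊨ T)
    (A B : Set M) (hA : IsBaseAt T F α A) (hB : IsAtomicSet T B) (hAB : A ⊆ B)
    (n : ℕ) (p : Set (L.Formula (↥A ⊕ Fin n))) (hp : IsAtomicType T A p) :
    ∃ q : Set (L.Formula (↥B ⊕ Fin n)), IsAtomicType T B q ∧
      ∀ φ : L.Formula (↥A ⊕ Fin n),
        φ ∈ p ↔ φ.relabel (Sum.map (Set.inclusion hAB) id) ∈ q :=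
  statement16_general T F α hAP M hM A B hA hB hAB n p hp

end
end AbsPaper
end

section
/- Let T be a complete theory in a language L of size ℵ₁ with atomic models, A an atomic set, and β ∈ C₀. Then S^{n,β}_at(A) is a closed subset of S^n_at(A), and S^{n,β}_at(A) is a Polish space or empty. -/
namespace AbsPaper

open FirstOrder FirstOrder.Language Cardinal Set

universe u v

noncomputable section

/-! ### Sublanguages and filtrations -/

variable {L : FirstOrder.Language.{u, v}}

/-! ### Complete formulas and suitable clubs -/

variable (T : L.Theory)

/-! ### Atomic sets and bases -/

variable {M : Type w} [L.Structure M]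

/-
A type in `S^{n,β}_at(A)` is determined by its restrictions `p_a` to the finite tuples `a`
from `A`, and each `p_a` is the set of `T`-consequences of an `L_β`-formula. Since `L_β` and
`A` are countable, `p ↦ (p_a)_a` maps `S^{n,β}_at(A)` into a countable product of countable
discrete spaces. It is continuous because `p_a` is constant on the basic neighbourhood of the
formula isolating it, it is an embedding because every formula over `A` uses finitely many
parameters, and its range is closed because a family `(p_a)_a` that is finitely approximated
by types glues to a type. Closedness of `S^{n,β}_at(A)` in `S^n_at(A)` is the same local
constancy: `p_a` cannot acquire an `L_β`-isolator on the neighbourhood of its isolator.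
-/

open Topology

theorem Sublanguage.Countable'.countable_formula {Sl : Sublanguage L} (hSl : Sl.Countable')
    {α : Type*} [Countable α] : Countable {φ : L.Formula α // Sl.IsBForm φ} := by
  have : ∀ l, Countable (Sl.lang.Functions l) := fun l => (hSl.1 l).to_subtype
  have : ∀ l, Countable (Sl.lang.Relations l) := fun l => (hSl.2 l).to_subtype
  have : Countable Sl.lang.Symbols := inferInstanceAs (Countable (_ ⊕ _))
  exact ((Set.countable_range (Sl.hom.onBoundedFormula (α := α) (k := 0))).mono
    fun _ hφ => hφ).to_subtype

theorem Formula.relabel_not {α β : Type*} (g : α → β) (φ : L.Formula α) :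
    φ.not.relabel g = (φ.relabel g).not :=
  BoundedFormula.relabel_not _ _

theorem exists_realize_iff_relabel_sumMap {α β : Type*} (ψ : L.Formula (α ⊕ β)) :
    ∃ (m : ℕ) (a : Fin m → α) (χ : L.Formula (Fin m ⊕ β)),
      ∀ v : α ⊕ β → M, ψ.Realize v ↔ (χ.relabel (Sum.map a id)).Realize v := by
  classical
  let e := ψ.freeVarFinset.toLeft.equivFin
  let f : ψ.freeVarFinset → Fin ψ.freeVarFinset.toLeft.card ⊕ β
    | ⟨Sum.inl x, hx⟩ => Sum.inl (e ⟨x, Finset.mem_toLeft.2 hx⟩)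
    | ⟨Sum.inr y, _⟩ => Sum.inr y
  refine ⟨_, fun i => (e.symm i).1, ψ.restrictFreeVar f, fun v => ?_⟩
  rw [Formula.realize_relabel]
  refine (BoundedFormula.realize_restrictFreeVar v fun x => ?_).symm
  rcases x with ⟨x | y, hx⟩
  · simp [f]
  · rfl

theorem exists_forall_eq_of_mem_closure_range {X ι : Type*} {D : ι → Type*}
    [∀ i, TopologicalSpace (D i)] [∀ i, DiscreteTopology (D i)] {f : X → ∀ i, D i}
    {y : ∀ i, D i} (hy : y ∈ closure (Set.range f)) (s : Finset ι) :
    ∃ x, ∀ i ∈ s, f x i = y i := by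
  obtain ⟨_, hxs, x, rfl⟩ := mem_closure_iff.1 hy _
    (isOpen_set_pi s.finite_toSet fun i _ => isOpen_discrete {y i}) (by simp)
  exact ⟨x, hxs⟩

section Types

variable {A : Set M} {n : ℕ} {p : Set (L.Formula (↥A ⊕ Fin n))}

theorem IsTypeOver.not_mem_iff (hp : IsTypeOver A n p) {φ : L.Formula (↥A ⊕ Fin n)} :
    φ.not ∈ p ↔ φ ∉ p := by
  classical
  refine ⟨fun hn h => ?_, (hp.1 φ).resolve_left⟩
  obtain ⟨b, hb⟩ := hp.2 {φ, φ.not} (by simp [Set.insert_subset_iff, h, hn])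
  exact hb φ.not (by simp) (hb φ (by simp))

theorem IsTypeOver.mem_of_realize_imp (hp : IsTypeOver A n p) {φ ψ : L.Formula (↥A ⊕ Fin n)}
    (hφ : φ ∈ p) (h : ∀ b, φ.Realize (paramAssign A b) → ψ.Realize (paramAssign A b)) :
    ψ ∈ p := by
  classical
  by_contra hψ
  obtain ⟨b, hb⟩ :=
    hp.2 {φ, ψ.not} (by simp [Set.insert_subset_iff, hφ, hp.not_mem_iff.2 hψ])
  exact hb ψ.not (by simp) (h b (hb φ (by simp)))

theorem IsTypeOver.mem_iff_mem_restrTp (hp : IsTypeOver A n p) {ψ : L.Formula (↥A ⊕ Fin n)}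
    {m : ℕ} {a : Fin m → ↥A} {χ : L.Formula (Fin m ⊕ Fin n)}
    (hχ : ∀ v : ↥A ⊕ Fin n → M, ψ.Realize v ↔ (χ.relabel (Sum.map a id)).Realize v) :
    ψ ∈ p ↔ χ ∈ restrTp A p a :=
  ⟨fun h => hp.mem_of_realize_imp h fun _ => (hχ _).1,
    fun h => hp.mem_of_realize_imp h fun _ => (hχ _).2⟩

theorem IsTypeOver.not_mem_restrTp_iff (hp : IsTypeOver A n p) {m : ℕ} {a : Fin m → ↥A}
    {χ : L.Formula (Fin m ⊕ Fin n)} : χ.not ∈ restrTp A p a ↔ χ ∉ restrTp A p a := by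
  change χ.not.relabel (Sum.map a id) ∈ p ↔ χ.relabel (Sum.map a id) ∉ p
  rw [Formula.relabel_not]
  exact hp.not_mem_iff

theorem IsTypeOver.of_forall_finset
    (h : ∀ fs : Finset (L.Formula (↥A ⊕ Fin n)),
      ∃ q, IsTypeOver A n q ∧ ∀ φ ∈ fs, φ ∈ p ↔ φ ∈ q) :
    IsTypeOver A n p := by
  classical
  refine ⟨fun φ => ?_, fun fs hfs => ?_⟩
  · obtain ⟨q, hq, hpq⟩ := h {φ, φ.not}
    rw [hpq φ (by simp), hpq φ.not (by simp)]
    exact hq.1 φ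
  · obtain ⟨q, hq, hpq⟩ := h fs
    exact hq.2 fs fun φ hφ => (hpq φ hφ).1 (hfs hφ)

theorem IsTypeOver.eq_tpOver [Subsingleton (Fin n → M)] (hp : IsTypeOver A n p)
    (b : Fin n → M) : p = tpOver A b := by
  classical
  ext ψ
  refine ⟨fun h => ?_, fun h => by_contra fun hψ => ?_⟩
  · obtain ⟨b', hb'⟩ := hp.2 {ψ} (by simpa using h)
    exact Subsingleton.elim b' b ▸ hb' ψ (by simp)
  · obtain ⟨b', hb'⟩ := hp.2 {ψ.not} (by simpa using hp.not_mem_iff.2 hψ)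
    exact (Subsingleton.elim b' b ▸ hb' ψ.not (by simp)) h

theorem subsingleton_snAt [Subsingleton (Fin n → M)] : Subsingleton ↥(SnAt T A n) := by
  refine ⟨fun p q => ?_⟩
  obtain ⟨b, -⟩ := p.2.1.2 ∅ (by simp)
  exact Subtype.ext ((p.2.1.eq_tpOver b).trans (q.2.1.eq_tpOver b).symm)

theorem isOpen_setOf_mem_snAt (φ : L.Formula (↥A ⊕ Fin n)) :
    IsOpen {p : ↥(SnAt T A n) | φ ∈ p.1} :=
  .basic _ ⟨φ, rfl⟩

theorem IsAtomicTypeIn.isAtomicType {Sl : Sublanguage L} (hp : IsAtomicTypeIn T Sl A p) :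
    IsAtomicType T A p :=
  ⟨hp.1, fun m a => let ⟨φ, _, hφ⟩ := hp.2 m a; ⟨φ, hφ⟩⟩

def glueRestrTp (r : (i : Σ m, Fin m → ↥A) → Set (L.Formula (Fin i.1 ⊕ Fin n))) :
    Set (L.Formula (↥A ⊕ Fin n)) :=
  {ψ | ∃ (m : ℕ) (a : Fin m → ↥A) (χ : L.Formula (Fin m ⊕ Fin n)),
    (∀ v : ↥A ⊕ Fin n → M, ψ.Realize v ↔ (χ.relabel (Sum.map a id)).Realize v) ∧ χ ∈ r ⟨m, a⟩}

section Glue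

variable {r : (i : Σ m, Fin m → ↥A) → Set (L.Formula (Fin i.1 ⊕ Fin n))}

theorem mem_glueRestrTp_iff
    (hr : ∀ s : Finset (Σ m, Fin m → ↥A),
      ∃ q, IsTypeOver A n q ∧ ∀ i ∈ s, restrTp A q i.2 = r i)
    {ψ : L.Formula (↥A ⊕ Fin n)} {m : ℕ} {a : Fin m → ↥A} {χ : L.Formula (Fin m ⊕ Fin n)}
    (hχ : ∀ v : ↥A ⊕ Fin n → M, ψ.Realize v ↔ (χ.relabel (Sum.map a id)).Realize v) :
    ψ ∈ glueRestrTp r ↔ χ ∈ r ⟨m, a⟩ := by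
  classical
  refine ⟨fun ⟨m', a', χ', hχ', hχ'r⟩ => ?_, fun h => ⟨m, a, χ, hχ, h⟩⟩
  obtain ⟨q, hq, hqr⟩ := hr {⟨m, a⟩, ⟨m', a'⟩}
  rw [← hqr ⟨m, a⟩ (by simp), ← hq.mem_iff_mem_restrTp hχ, hq.mem_iff_mem_restrTp hχ',
    hqr ⟨m', a'⟩ (by simp)]
  exact hχ'r

theorem isTypeOver_glueRestrTp
    (hr : ∀ s : Finset (Σ m, Fin m → ↥A),
      ∃ q, IsTypeOver A n q ∧ ∀ i ∈ s, restrTp A q i.2 = r i) :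
    IsTypeOver A n (glueRestrTp r) := by
  classical
  refine IsTypeOver.of_forall_finset fun fs => ?_
  choose m a χ hχ using fun ψ : L.Formula (↥A ⊕ Fin n) =>
    exists_realize_iff_relabel_sumMap (M := M) ψ
  obtain ⟨q, hq, hqr⟩ := hr (fs.image fun ψ => ⟨m ψ, a ψ⟩)
  refine ⟨q, hq, fun ψ hψ => ?_⟩
  rw [mem_glueRestrTp_iff hr (hχ ψ), hq.mem_iff_mem_restrTp (hχ ψ),
    hqr _ (Finset.mem_image_of_mem _ hψ)]

theorem restrTp_glueRestrTp
    (hr : ∀ s : Finset (Σ m, Fin m → ↥A),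
      ∃ q, IsTypeOver A n q ∧ ∀ i ∈ s, restrTp A q i.2 = r i)
    {m : ℕ} (a : Fin m → ↥A) : restrTp A (glueRestrTp r) a = r ⟨m, a⟩ :=
  Set.ext fun _ => mem_glueRestrTp_iff hr fun _ => Iff.rfl

end Glue

end Types

def impliedBy {β : Type*} (φ : L.Formula β) : Set (L.Formula β) :=
  {ψ | T ⊨ᵇ φ.imp ψ}

theorem isolatesSet_impliedBy {β : Type*} (φ : L.Formula β) :
    IsolatesSet T φ (impliedBy T φ) :=
  ⟨fun _ _ _ => id, fun _ h => h⟩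

def isolatedTypesIn (Sl : Sublanguage L) (β : Type*) : Set (Set (L.Formula β)) :=
  Set.range fun φ : {φ : L.Formula β // Sl.IsBForm φ} => impliedBy T φ.1

instance (Sl : Sublanguage L) (β : Type*) : TopologicalSpace ↥(isolatedTypesIn T Sl β) := ⊥

instance (Sl : Sublanguage L) (β : Type*) : DiscreteTopology ↥(isolatedTypesIn T Sl β) :=
  ⟨rfl⟩

section Models

variable [M ⊨ T] [Nonempty M] {Sl : Sublanguage L} {A : Set M} {n : ℕ}
  {p q : Set (L.Formula (↥A ⊕ Fin n))}

theorem IsTypeOver.relabel_mem_of_models (hp : IsTypeOver A n p) {γ : Type*}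
    {g : γ → ↥A ⊕ Fin n} {φ ψ : L.Formula γ} (hφ : φ.relabel g ∈ p) (h : T ⊨ᵇ φ.imp ψ) :
    ψ.relabel g ∈ p :=
  hp.mem_of_realize_imp hφ fun _ hb => by
    rw [Formula.realize_relabel] at hb ⊢
    exact h.realize_boundedFormula M hb

theorem IsolatesSet.restrTp_eq_impliedBy {m : ℕ} {a : Fin m → ↥A}
    {φ : L.Formula (Fin m ⊕ Fin n)} (hφ : IsolatesSet T φ (restrTp A p a))
    (hp : IsTypeOver A n p) (hq : IsTypeOver A n q) (hφq : φ ∈ restrTp A q a) :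
    restrTp A q a = impliedBy T φ := by
  ext ψ
  refine ⟨fun hψ => by_contra fun h => ?_, fun h => hq.relabel_mem_of_models T hφq h⟩
  have hnψ : ψ.not ∈ restrTp A p a := hp.not_mem_restrTp_iff.2 fun hψp => h (hφ.2 ψ hψp)
  exact hq.not_mem_restrTp_iff.1 (hq.relabel_mem_of_models T hφq (hφ.2 _ hnψ)) hψ

theorem IsolatesSet.restrTp_eq_restrTp {m : ℕ} {a : Fin m → ↥A}
    {φ : L.Formula (Fin m ⊕ Fin n)} (hφ : IsolatesSet T φ (restrTp A p a))
    (hp : IsTypeOver A n p) (hq : IsTypeOver A n q) (hφq : φ ∈ restrTp A q a) :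
    restrTp A q a = restrTp A p a :=
  (hφ.restrTp_eq_impliedBy T hp hq hφq).trans (hφ.restrTp_eq_impliedBy T hp hp hφ.1).symm

theorem isClosed_snAtIn :
    IsClosed {p : ↥(SnAt T A n) | p.1 ∈ SnAtIn T Sl A n} := by
  refine isOpen_compl_iff.1 (isOpen_iff_forall_mem_open.2 fun p hp => ?_)
  obtain ⟨m, a, hnone⟩ : ∃ (m : ℕ) (a : Fin m → ↥A),
      ∀ χ, Sl.IsBForm χ → ¬IsolatesSet T χ (restrTp A p.1 a) := by
    simpa [SnAtIn, IsAtomicTypeIn, p.2.1] using hp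
  obtain ⟨φ, hφ⟩ := p.2.2 m a
  refine ⟨{q | φ.relabel (Sum.map a id) ∈ q.1}, fun q hq hqIn => ?_,
    isOpen_setOf_mem_snAt T _, hφ.1⟩
  obtain ⟨χ, hχ, hχq⟩ := hqIn.2 m a
  exact hnone χ hχ (hφ.restrTp_eq_restrTp T p.2.1 q.2.1 hq ▸ hχq)

theorem IsAtomicTypeIn.restrTp_mem (hp : IsAtomicTypeIn T Sl A p)
    {m : ℕ} (a : Fin m → ↥A) : restrTp A p a ∈ isolatedTypesIn T Sl (Fin m ⊕ Fin n) :=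
  let ⟨φ, hSl, hφ⟩ := hp.2 m a
  ⟨⟨φ, hSl⟩, (hφ.restrTp_eq_impliedBy T hp.1 hp.1 hφ.1).symm⟩

variable (Sl A n)

def restrTps (q : {p : ↥(SnAt T A n) // p.1 ∈ SnAtIn T Sl A n}) (i : Σ m, Fin m → ↥A) :
    isolatedTypesIn T Sl (Fin i.1 ⊕ Fin n) :=
  ⟨restrTp A q.1.1 i.2, IsAtomicTypeIn.restrTp_mem T q.2 i.2⟩

theorem continuous_restrTps : Continuous (restrTps T Sl A n) := by
  refine continuous_pi fun i => IsLocallyConstant.continuous <|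
    (IsLocallyConstant.iff_exists_open _).2 fun q => ?_
  obtain ⟨φ, -, hφ⟩ := q.2.2 i.1 i.2
  refine ⟨{q' | φ.relabel (Sum.map i.2 id) ∈ q'.1.1},
    (isOpen_setOf_mem_snAt T _).preimage continuous_subtype_val, hφ.1, fun q' hq' => ?_⟩
  exact Subtype.ext (hφ.restrTp_eq_restrTp T q.2.1 q'.2.1 hq')

theorem restrTps_injective : Function.Injective (restrTps T Sl A n) := by
  intro q q' h
  refine Subtype.ext (Subtype.ext (Set.ext fun ψ => ?_))
  obtain ⟨m, a, χ, hχ⟩ := exists_realize_iff_relabel_sumMap (M := M) ψ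
  rw [q.2.1.mem_iff_mem_restrTp hχ, q'.2.1.mem_iff_mem_restrTp hχ]
  exact Set.ext_iff.1 (congrArg Subtype.val (congrFun h ⟨m, a⟩)) χ

theorem isInducing_restrTps : IsInducing (restrTps T Sl A n) := by
  refine ⟨le_antisymm (continuous_iff_le_induced.1 (continuous_restrTps T Sl A n)) ?_⟩
  change _ ≤ TopologicalSpace.induced Subtype.val (TopologicalSpace.generateFrom _)
  rw [induced_generateFrom_eq, TopologicalSpace.le_generateFrom_iff_subset_isOpen]
  rintro _ ⟨_, ⟨ψ, rfl⟩, rfl⟩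
  obtain ⟨m, a, χ, hχ⟩ := exists_realize_iff_relabel_sumMap (M := M) ψ
  refine ⟨{y | χ ∈ (y ⟨m, a⟩).1}, ?_, Set.ext fun q => (q.2.1.mem_iff_mem_restrTp hχ).symm⟩
  change IsOpen ((fun y : ∀ i : Σ m, Fin m → ↥A, isolatedTypesIn T Sl (Fin i.1 ⊕ Fin n) =>
    y ⟨m, a⟩) ⁻¹' {z : ↥(isolatedTypesIn T Sl (Fin m ⊕ Fin n)) | χ ∈ z.1})
  exact (continuous_apply _).isOpen_preimage _ (isOpen_discrete _)

theorem isClosed_range_restrTps : IsClosed (Set.range (restrTps T Sl A n)) := by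
  refine closure_subset_iff_isClosed.1 fun y hy => ?_
  have hr : ∀ s : Finset (Σ m, Fin m → ↥A),
      ∃ q, IsTypeOver A n q ∧ ∀ i ∈ s, restrTp A q i.2 = (y i).1 := fun s =>
    let ⟨q, hq⟩ := exists_forall_eq_of_mem_closure_range hy s
    ⟨q.1.1, q.2.1, fun i hi => congrArg Subtype.val (hq i hi)⟩
  have hglue : glueRestrTp (fun i => (y i).1) ∈ SnAtIn T Sl A n := by
    refine ⟨isTypeOver_glueRestrTp hr, fun m a => ?_⟩
    obtain ⟨⟨φ, hφ⟩, hyφ⟩ := (y ⟨m, a⟩).2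
    refine ⟨φ, hφ, ?_⟩
    rw [restrTp_glueRestrTp hr, ← hyφ]
    exact isolatesSet_impliedBy T φ
  exact ⟨⟨⟨_, IsAtomicTypeIn.isAtomicType T hglue⟩, hglue⟩,
    funext fun i => Subtype.ext (restrTp_glueRestrTp hr i.2)⟩

theorem polishSpace_snAtIn (hA : A.Countable) (hSl : Sl.Countable') :
    PolishSpace {p : ↥(SnAt T A n) // p.1 ∈ SnAtIn T Sl A n} := by
  have := hA.to_subtype
  have : ∀ m, Countable ↥(isolatedTypesIn T Sl (Fin m ⊕ Fin n)) := fun m =>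
    have := hSl.countable_formula (α := Fin m ⊕ Fin n)
    (Set.countable_range _).to_subtype
  exact (IsClosedEmbedding.mk ⟨isInducing_restrTps T Sl A n, restrTps_injective T Sl A n⟩
    (isClosed_range_restrTps T Sl A n)).polishSpace

end Models

theorem statement19_general {L : FirstOrder.Language.{u, v}} (T : L.Theory)
    (F : Filtration L) (C₀ : Set Ordinal.{0}) (hsuit : SuitableClub T F C₀)
    (β : Ordinal.{0}) (hβ : β ∈ C₀)
    (M : Type (max u v)) [L.Structure M] (hM : M ⊨ T)
    (A : Set M) (hA : IsAtomicSet T A) (n : ℕ) :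
    IsClosed {p : ↥(SnAt T A n) | p.1 ∈ SnAtIn T (F.sub β) A n} ∧
    (SnAtIn T (F.sub β) A n = ∅ ∨
      PolishSpace {p : ↥(SnAt T A n) // p.1 ∈ SnAtIn T (F.sub β) A n}) := by
  -- `M ⊨ T` allows an empty `M`, over which `T`-provable formulas need not hold; there
  -- `S^n_at(A)` has at most one point.
  rcases isEmpty_or_nonempty M with _ | _
  · have := subsingleton_snAt T (A := A) (n := n)
    exact ⟨isClosed_discrete _, Or.inr inferInstance⟩
  · exact ⟨isClosed_snAtIn T,
      Or.inr (polishSpace_snAtIn T (F.sub β) A n hA.1 (F.countable β (hsuit.1.1 hβ)))⟩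

/-- For an atomic set `A` and `β ∈ C₀`, the space `S^{n,β}_{at}(A)` is
a closed subset of `S^n_{at}(A)`, and (with the subspace topology) is Polish or empty. -/
theorem statement19 {L : FirstOrder.Language.{u, v}} (T : L.Theory)
    (hcomp : T.IsComplete) (hcard : L.card = Cardinal.aleph 1)
    (hatomic : ∃ N : Theory.ModelType.{u, v, max u v} T, IsAtomicModel T N)
    (F : Filtration L) (C₀ : Set Ordinal.{0}) (hsuit : SuitableClub T F C₀)
    (β : Ordinal.{0}) (hβ : β ∈ C₀)
    (M : Type (max u v)) [L.Structure M] (hM : M ⊨ T)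
    (A : Set M) (hA : IsAtomicSet T A) (n : ℕ) :
    IsClosed {p : ↥(SnAt T A n) | p.1 ∈ SnAtIn T (F.sub β) A n} ∧
    (SnAtIn T (F.sub β) A n = ∅ ∨
      PolishSpace {p : ↥(SnAt T A n) // p.1 ∈ SnAtIn T (F.sub β) A n}) :=
  statement19_general T F C₀ hsuit β hβ M hM A hA n

end
end AbsPaper
end
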